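/- arXiv:1812.04874 — 10 statements merged into one kernel-verified Lean document; each statement's English description precedes it below -/
import Mathlib

section
/- Let f be a C² function positive on a closed interval I ⊆ ℝ, with 0 < m ≤ inf{f(t) : t ∈ I} and |f'(t)| ≤ D, |f''(t)| ≤ D for t ∈ I. If p² ≤ 4q and N > D/(2m) + D²/(2m²), then the function φ(t) = e^{N(t²+pt+q)} f(t) satisfies φ''(t) ≥ -D²/m - D + 2Nm > 0 for all t ∈ I; in particular φ is strongly convex on I. -/
/-!
Write `φ = e^g f` with `g(t) = N(t² + pt + q)`. Then `φ'' = e^g (g'² f + 2 g' f' + g'' f + f'')`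
with `g'' = 2N`. Bounding `f ≥ m` and `|f'|, |f''| ≤ D` and completing the square,
`m g'² - 2D|g'| ≥ -D²/m`, so the bracket is at least `c = -D²/m - D + 2Nm`, which is positive
exactly when `N > D/(2m) + D²/(2m²)`. Since `p² ≤ 4q` makes `g ≥ 0`, the factor `e^g ≥ 1`
only helps, and `φ'' ≥ c` gives strong convexity since `φ - c t²/2` is convex.
-/

open Real

lemma deriv_exp_mul {g h : ℝ → ℝ} (hg : Differentiable ℝ g) (hh : Differentiable ℝ h) :
    deriv (fun t => exp (g t) * h t) = fun t => exp (g t) * (deriv g t * h t + deriv h t) := by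
  funext t
  rw [deriv_fun_mul (hg t).exp (hh t), _root_.deriv_exp (hg t)]
  ring

lemma deriv_deriv_exp_mul {g h : ℝ → ℝ} (hg : ContDiff ℝ 2 g) (hh : ContDiff ℝ 2 h) (t : ℝ) :
    deriv (deriv fun t => exp (g t) * h t) t =
      exp (g t) * (deriv g t ^ 2 * h t + 2 * deriv g t * deriv h t
        + deriv (deriv g) t * h t + deriv (deriv h) t) := by
  have hg₁ : Differentiable ℝ g := hg.differentiable (by norm_num)
  have hh₁ : Differentiable ℝ h := hh.differentiable (by norm_num)
  have hg₂ : Differentiable ℝ (deriv g) := (hg.deriv' (n := 1)).differentiable one_ne_zero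
  have hh₂ : Differentiable ℝ (deriv h) := (hh.deriv' (n := 1)).differentiable one_ne_zero
  rw [deriv_exp_mul hg₁ hh₁,
    deriv_exp_mul (h := fun t => deriv g t * h t + deriv h t) hg₁ (by fun_prop)]
  beta_reduce
  rw [deriv_fun_add ((hg₂ t).fun_mul (hh₁ t)) (hh₂ t), deriv_fun_mul (hg₂ t) (hh₁ t)]
  ring

lemma deriv_quadratic (N p q : ℝ) :
    deriv (fun t => N * (t ^ 2 + p * t + q)) = fun t => N * (2 * t + p) := by
  funext t
  refine HasDerivAt.deriv ?_
  simpa using (((hasDerivAt_pow 2 t).add ((hasDerivAt_id t).const_mul p)).add_const q).const_mul N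

lemma strongConvexOn_of_le_deriv2 {s : Set ℝ} (hs : Convex ℝ s) {φ : ℝ → ℝ} {c : ℝ}
    (hφ : ContDiff ℝ 2 φ) (hc : ∀ x ∈ interior s, c ≤ deriv^[2] φ x) :
    StrongConvexOn s c φ := by
  have hφ₁ : Differentiable ℝ φ := hφ.differentiable (by norm_num)
  have hφ₂ : Differentiable ℝ (deriv φ) := (hφ.deriv' (n := 1)).differentiable one_ne_zero
  have hψ₁ : ∀ x, HasDerivAt (fun x => φ x - c / 2 * x ^ 2) (deriv φ x - c * x) x := fun x =>
    ((hφ₁ x).hasDerivAt.fun_sub ((hasDerivAt_pow 2 x).const_mul (c / 2))).congr_deriv (by ring)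
  have hψ₂ : ∀ x, HasDerivAt (fun x => deriv φ x - c * x) (deriv^[2] φ x - c) x := fun x =>
    ((hφ₂ x).hasDerivAt.fun_sub ((hasDerivAt_id x).const_mul c)).congr_deriv (by simp)
  have hderiv : deriv (fun x => φ x - c / 2 * x ^ 2) = fun x => deriv φ x - c * x :=
    funext fun x => (hψ₁ x).deriv
  simp only [strongConvexOn_iff_convex, Real.norm_eq_abs, sq_abs]
  refine convexOn_of_deriv2_nonneg hs (fun x _ => (hψ₁ x).continuousAt.continuousWithinAt)
    (fun x _ => (hψ₁ x).differentiableAt.differentiableWithinAt) ?_ fun x hx => ?_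
  · rw [hderiv]
    exact fun x _ => (hψ₂ x).differentiableAt.differentiableWithinAt
  · rw [Function.iterate_succ_apply, Function.iterate_one, hderiv, (hψ₂ x).deriv]
    exact sub_nonneg.mpr (hc x hx)

lemma neg_sq_div_sub_add_le_of_abs_le {m D N x y a b : ℝ} (hm : 0 < m) (hN : 0 ≤ N) (hy : m ≤ y)
    (ha : |a| ≤ D) (hb : |b| ≤ D) :
    -D ^ 2 / m - D + 2 * N * m ≤ x ^ 2 * y + 2 * x * a + 2 * N * y + b := by
  have hxa : -(|x| * D) ≤ x * a :=
    calc -(|x| * D) ≤ -(|x| * |a|) := neg_le_neg (mul_le_mul_of_nonneg_left ha (abs_nonneg x))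
      _ = -|x * a| := by rw [abs_mul]
      _ ≤ x * a := neg_abs_le _
  have hcompl : -D ^ 2 / m ≤ m * x ^ 2 - 2 * D * |x| := by
    rw [neg_div, neg_le_iff_add_nonneg', ← sq_abs x]
    have : (m * |x| - D) ^ 2 / m = D ^ 2 / m + (m * |x| ^ 2 - 2 * D * |x|) := by
      field_simp; ring
    rw [← this]; positivity
  have hy₁ : x ^ 2 * m ≤ x ^ 2 * y := mul_le_mul_of_nonneg_left hy (sq_nonneg x)
  have hy₂ : 2 * N * m ≤ 2 * N * y := mul_le_mul_of_nonneg_left hy (by positivity)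
  linarith [(abs_le.mp hb).1]

theorem stmt0_general (f : ℝ → ℝ) (I : Set ℝ) (hIcon : Convex ℝ I)
    (hf : ContDiff ℝ 2 f) (m D N p q : ℝ) (hm : 0 < m)
    (hmf : ∀ t ∈ I, m ≤ f t)
    (hf' : ∀ t ∈ I, |deriv f t| ≤ D)
    (hf'' : ∀ t ∈ I, |deriv (deriv f) t| ≤ D)
    (hpq : p ^ 2 ≤ 4 * q)
    (hN : D / (2 * m) + D ^ 2 / (2 * m ^ 2) < N) :
    (∀ t ∈ I,
      -D ^ 2 / m - D + 2 * N * m ≤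
        deriv (deriv (fun t => Real.exp (N * (t ^ 2 + p * t + q)) * f t)) t) ∧
    0 < -D ^ 2 / m - D + 2 * N * m ∧
    StrongConvexOn I (-D ^ 2 / m - D + 2 * N * m)
      (fun t => Real.exp (N * (t ^ 2 + p * t + q)) * f t) := by
  have hc : 0 < -D ^ 2 / m - D + 2 * N * m := by
    have : -D ^ 2 / m - D + 2 * N * m = 2 * m * (N - (D / (2 * m) + D ^ 2 / (2 * m ^ 2))) := by
      field_simp; ring
    rw [this]; exact mul_pos (by positivity) (sub_pos.mpr hN)
  have hφ'' : ∀ t ∈ I, -D ^ 2 / m - D + 2 * N * m ≤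
      deriv (deriv (fun t => Real.exp (N * (t ^ 2 + p * t + q)) * f t)) t := by
    intro t ht
    have hD : 0 ≤ D := (abs_nonneg _).trans (hf' t ht)
    have hN₀ : 0 ≤ N := le_trans (by positivity) hN.le
    have hquad : 0 ≤ t ^ 2 + p * t + q := by nlinarith [sq_nonneg (2 * t + p)]
    have hexp : 1 ≤ exp (N * (t ^ 2 + p * t + q)) := one_le_exp (mul_nonneg hN₀ hquad)
    have hbracket := neg_sq_div_sub_add_le_of_abs_le (x := N * (2 * t + p)) hm hN₀ (hmf t ht)
      (hf' t ht) (hf'' t ht)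
    have hlin : deriv (fun t => N * (2 * t + p)) t = 2 * N := by simp [mul_comm]
    rw [deriv_deriv_exp_mul (by fun_prop) hf]
    simp only [deriv_quadratic, hlin]
    exact hbracket.trans (le_mul_of_one_le_left (hc.le.trans hbracket) hexp)
  refine ⟨hφ'', hc, strongConvexOn_of_le_deriv2 hIcon (by fun_prop) fun t ht => ?_⟩
  exact hφ'' t (interior_subset ht)

/-- For a `C²` function `f` positive on a closed interval `I ⊆ ℝ`, with
`0 < m ≤ inf f(I)`, `|f'| ≤ D`, `|f''| ≤ D` on `I`, if `p² ≤ 4q` and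
`N > D/(2m) + D²/(2m²)`, then `φ(t) = e^{N(t²+pt+q)} f(t)` satisfies
`φ'' ≥ -D²/m - D + 2Nm > 0` on `I`; in particular `φ` is strongly convex on `I`. -/
theorem stmt0 (f : ℝ → ℝ) (I : Set ℝ) (hIcl : IsClosed I) (hIcon : Convex ℝ I)
    (hf : ContDiff ℝ 2 f) (m D N p q : ℝ) (hD : 0 < D) (hm : 0 < m)
    (hmf : ∀ t ∈ I, m ≤ f t)
    (hf' : ∀ t ∈ I, |deriv f t| ≤ D)
    (hf'' : ∀ t ∈ I, |deriv (deriv f) t| ≤ D)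
    (hpq : p ^ 2 ≤ 4 * q)
    (hN : D / (2 * m) + D ^ 2 / (2 * m ^ 2) < N) :
    (∀ t ∈ I,
      -D ^ 2 / m - D + 2 * N * m ≤
        deriv (deriv (fun t => Real.exp (N * (t ^ 2 + p * t + q)) * f t)) t) ∧
    0 < -D ^ 2 / m - D + 2 * N * m ∧
    StrongConvexOn I (-D ^ 2 / m - D + 2 * N * m)
      (fun t => Real.exp (N * (t ^ 2 + p * t + q)) * f t) :=
  stmt0_general f I hIcon hf m D N p q hm hmf hf' hf'' hpq hN
end

section
/- Let f be a C² function on a closed interval I ⊆ ℝ with m < inf{f(t) : t ∈ I}, and |f'(t)| ≤ D, |f''(t)| ≤ D on I. Then for every ξ ∈ ℝ and every N ≥ 1, the function ψ(t) = e^{N(t-ξ)²} (f(t) - m + D) is strongly convex on I. -/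
open Real Set

/-!
Write `s = t - ξ` and `g = f - m + D`, so that `g ≥ D + ε` on `I` with `ε = m' - m > 0`. Then
`ψ'' = e^{N s²} ((2N + 4N² s²) g + 4N s f' + f'')`, and with `u = 2N|s|` the bracket is at least
`D (u - 1)² + (2N - 2) D + ε (2N + u²) ≥ 2N ε`: the Gaussian weight turns the first-order term
into a perfect square. Since `e^{N s²} ≥ 1`, `ψ'' ≥ ε` on `I`, so `ψ` is `ε`-strongly convex.
-/

lemma strongConvexOn_of_hasDerivWithinAt2_ge {s : Set ℝ} (hs : Convex ℝ s) {μ : ℝ}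
    {f f' f'' : ℝ → ℝ} (hf : ContinuousOn f s)
    (hf' : ∀ x ∈ interior s, HasDerivWithinAt f (f' x) (interior s) x)
    (hf'' : ∀ x ∈ interior s, HasDerivWithinAt f' (f'' x) (interior s) x)
    (hμ : ∀ x ∈ interior s, μ ≤ f'' x) : StrongConvexOn s μ f := by
  rw [strongConvexOn_iff_convex]
  simp only [Real.norm_eq_abs, sq_abs]
  refine convexOn_of_hasDerivWithinAt2_nonneg hs (f' := fun x ↦ f' x - μ * x)
    (f'' := fun x ↦ f'' x - μ) (hf.sub (by fun_prop)) (fun x hx ↦ ?_) (fun x hx ↦ ?_)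
    (fun x hx ↦ sub_nonneg.2 (hμ x hx))
  · exact ((hf' x hx).sub ((hasDerivAt_pow 2 x).const_mul (μ / 2)).hasDerivWithinAt).congr_deriv
      (by ring)
  · exact ((hf'' x hx).sub ((hasDerivAt_id x).const_mul μ).hasDerivWithinAt).congr_deriv
      (by rw [mul_one])

lemma hasDerivAt_exp_mul_sub_sq (N ξ t : ℝ) :
    HasDerivAt (fun t ↦ exp (N * (t - ξ) ^ 2)) (2 * N * (t - ξ) * exp (N * (t - ξ) ^ 2)) t := by
  have hq : HasDerivAt (fun t ↦ N * (t - ξ) ^ 2) (2 * N * (t - ξ)) t :=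
    ((((hasDerivAt_id t).sub_const ξ).pow 2).const_mul N).congr_deriv
      (by simp only [id_eq]; ring)
  simpa only [mul_comm] using hq.exp

section GaussianWeight

variable {N ξ t : ℝ} {h h' : ℝ → ℝ}

lemma hasDerivAt_exp_mul_sub_sq_mul {g : ℝ} (hh : HasDerivAt h g t) :
    HasDerivAt (fun t ↦ exp (N * (t - ξ) ^ 2) * h t)
      (exp (N * (t - ξ) ^ 2) * (2 * N * (t - ξ) * h t + g)) t :=
  ((hasDerivAt_exp_mul_sub_sq N ξ t).mul hh).congr_deriv (by ring)

lemma hasDerivAt_exp_mul_sub_sq_mul_deriv {g : ℝ} (hh : HasDerivAt h (h' t) t)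
    (hh' : HasDerivAt h' g t) :
    HasDerivAt (fun t ↦ exp (N * (t - ξ) ^ 2) * (2 * N * (t - ξ) * h t + h' t))
      (exp (N * (t - ξ) ^ 2) *
        ((2 * N + 4 * N ^ 2 * (t - ξ) ^ 2) * h t + 4 * N * (t - ξ) * h' t + g)) t := by
  have hlin : HasDerivAt (fun t ↦ 2 * N * (t - ξ)) (2 * N) t := by
    simpa only [id_eq, mul_one] using ((hasDerivAt_id t).sub_const ξ).const_mul (2 * N)
  exact (hasDerivAt_exp_mul_sub_sq_mul ((hlin.mul hh).add hh')).congr_deriv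
    (by simp only [Pi.add_apply, Pi.mul_apply]; ring)

end GaussianWeight

lemma two_mul_mul_le_weighted_second_deriv {N D ε s g a b : ℝ} (hN : 1 ≤ N) (hD : 0 ≤ D)
    (hε : 0 ≤ ε) (hg : D + ε ≤ g) (ha : |a| ≤ D) (hb : |b| ≤ D) :
    2 * N * ε ≤ (2 * N + 4 * N ^ 2 * s ^ 2) * g + 4 * N * s * a + b := by
  have hsa : -(4 * N * |s| * D) ≤ 4 * N * s * a := by
    have : |s * a| ≤ |s| * D := abs_mul s a ▸ mul_le_mul_of_nonneg_left ha (abs_nonneg s)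
    nlinarith [neg_abs_le (s * a)]
  rw [← sq_abs s]
  have hweight : 0 ≤ 2 * N + 4 * N ^ 2 * |s| ^ 2 := by positivity
  nlinarith [mul_le_mul_of_nonneg_left hg hweight, neg_abs_le b,
    mul_nonneg hD (sq_nonneg (2 * N * |s| - 1)), mul_nonneg hε (sq_nonneg (2 * N * |s|)),
    mul_nonneg (sub_nonneg.2 hN) hD]

theorem stmt1_general (f : ℝ → ℝ) (I : Set ℝ) (hIcon : Convex ℝ I)
    (hf : ContDiff ℝ 2 f) (m D : ℝ) (hD : 0 < D)
    (hmf : ∃ m', m < m' ∧ ∀ t ∈ I, m' ≤ f t)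
    (hf' : ∀ t ∈ I, |deriv f t| ≤ D)
    (hf'' : ∀ t ∈ I, |deriv (deriv f) t| ≤ D) :
    ∀ ξ : ℝ, ∀ N : ℝ, 1 ≤ N →
      ∃ μ > 0, StrongConvexOn I μ
        (fun t => Real.exp (N * (t - ξ) ^ 2) * (f t - m + D)) := by
  intro ξ N hN
  obtain ⟨m', hmm', hm'⟩ := hmf
  have hd1 (t : ℝ) : HasDerivAt (fun t ↦ f t - m + D) (deriv f t) t :=
    (((hf.differentiable (by norm_num)) t).hasDerivAt.sub_const m).add_const D
  have hd2 (t : ℝ) : HasDerivAt (deriv f) (deriv (deriv f) t) t :=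
    ((hf.iterate_deriv' 1 1).differentiable (by norm_num) t).hasDerivAt
  have hψ' (t : ℝ) := hasDerivAt_exp_mul_sub_sq_mul (N := N) (ξ := ξ) (hd1 t)
  have hψ'' (t : ℝ) := hasDerivAt_exp_mul_sub_sq_mul_deriv (N := N) (ξ := ξ) (hd1 t) (hd2 t)
  refine ⟨m' - m, sub_pos.2 hmm', strongConvexOn_of_hasDerivWithinAt2_ge hIcon
    (fun t _ ↦ (hψ' t).continuousAt.continuousWithinAt) (fun t _ ↦ (hψ' t).hasDerivWithinAt)
    (fun t _ ↦ (hψ'' t).hasDerivWithinAt) fun t ht ↦ ?_⟩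
  replace ht := interior_subset ht
  have hbracket := two_mul_mul_le_weighted_second_deriv (s := t - ξ) (g := f t - m + D) hN
    hD.le (sub_pos.2 hmm').le (by linarith [hm' t ht]) (hf' t ht) (hf'' t ht)
  have hscale : m' - m ≤ 2 * N * (m' - m) := by nlinarith
  exact hscale.trans <| hbracket.trans <|
    le_mul_of_one_le_left (by linarith) (one_le_exp (by positivity))

/-- For a `C²` function `f` on a closed interval `I ⊆ ℝ` with
`m < inf f(I)` and `|f'| ≤ D`, `|f''| ≤ D` on `I`, for every `ξ ∈ ℝ` and `N ≥ 1`
the function `ψ(t) = e^{N(t-ξ)²}(f(t) - m + D)` is strongly convex on `I`. -/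
theorem stmt1 (f : ℝ → ℝ) (I : Set ℝ) (hIcl : IsClosed I) (hIcon : Convex ℝ I)
    (hf : ContDiff ℝ 2 f) (m D : ℝ) (hD : 0 < D)
    (hmf : ∃ m', m < m' ∧ ∀ t ∈ I, m' ≤ f t)
    (hf' : ∀ t ∈ I, |deriv f t| ≤ D)
    (hf'' : ∀ t ∈ I, |deriv (deriv f) t| ≤ D) :
    ∀ ξ : ℝ, ∀ N : ℝ, 1 ≤ N →
      ∃ μ > 0, StrongConvexOn I μ
        (fun t => Real.exp (N * (t - ξ) ^ 2) * (f t - m + D)) :=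
  stmt1_general f I hIcon hf m D hD hmf hf' hf''
end

section
/- Let f ∈ ℝ[x₁,…,xₙ] be a polynomial positive on a compact convex set X ⊆ ℝⁿ, let R = max{|x| : x ∈ X}, and 0 < m ≤ min{f(x) : x ∈ X}. Write f = Σ_{j=0}^{d} Σ_{|ν|=j} a_ν x^ν and set D_n(f,R) = max{1, Σ_{j=1}^{d} Σ_{|ν|=j} j|a_ν| R^{j-1}, Σ_{j=1}^{d} Σ_{|ν|=j} j(j-1)|a_ν| R^{j-2}}. Then for any ξ ∈ ℝⁿ, any D ≥ D_n(f,R), and any real N > D/(2m) + D²/(2m²), the function φ(x) = e^{N|x-ξ|²} f(x) is strongly convex on X. -/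
open Real Set MvPolynomial

/-- The degree `|ν|` of a multi-index. -/
noncomputable def mdeg {n : ℕ} (ν : Fin n →₀ ℕ) : ℕ := ν.sum fun _ e => e

/-- `D_n(f,R) = max {1, Σ j|a_ν|R^{j-1}, Σ j(j-1)|a_ν|R^{j-2}}`. -/
noncomputable def Dn {n : ℕ} (f : MvPolynomial (Fin n) ℝ) (R : ℝ) : ℝ :=
  max 1 (max
    (∑ ν ∈ f.support, (mdeg ν : ℝ) * |f.coeff ν| * R ^ (mdeg ν - 1))
    (∑ ν ∈ f.support, (mdeg ν : ℝ) * ((mdeg ν : ℝ) - 1) * |f.coeff ν| * R ^ (mdeg ν - 2)))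

/-! Along a segment `x + t v` of `X`, `φ` is `e^q p` with `q t = N‖x + t v - ξ‖²` and `p` the
restriction of `f`, so `φ'' = e^q ((q'' + q'²) p + 2 q' p' + p'')` with `q'' = 2N‖v‖²`.
Differentiating `f` monomial by monomial gives `|p'| ≤ D‖v‖` and `|p''| ≤ D‖v‖²` on `X`, and
completing the square in `q'` gives `q'² p + 2 q' p' ≥ -p'²/m`. Since `e^q ≥ 1`, this yields
`φ'' ≥ (2Nm - D - D²/m)‖v‖²`, and the bound on `N` is exactly what makes this constant positive. -/

namespace MvPolynomial

theorem abs_map_le_sum_abs_map_monomial {σ : Type*} (L : MvPolynomial σ ℝ →+ ℝ)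
    (f : MvPolynomial σ ℝ) : |L f| ≤ ∑ ν ∈ f.support, |L (monomial ν (f.coeff ν))| := by
  conv_lhs => rw [← support_sum_monomial_coeff f, map_sum]
  exact Finset.abs_sum_le_sum_abs _ _

section DirDeriv

variable {σ R : Type*} [Fintype σ] [CommSemiring R]

noncomputable def dirDeriv (v : σ → R) : Derivation R (MvPolynomial σ R) (MvPolynomial σ R) :=
  ∑ i, v i • pderiv i

theorem dirDeriv_apply (v : σ → R) (p : MvPolynomial σ R) :
    dirDeriv v p = ∑ i, v i • pderiv i p := by
  simp only [dirDeriv, ← Derivation.coeFnAddMonoidHom_apply, map_sum]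
  simp [Derivation.coeFnAddMonoidHom_apply]

theorem dirDeriv_X (v : σ → R) (i : σ) : dirDeriv v (X i) = C (v i) := by
  classical
  simp [dirDeriv_apply, pderiv_X, Pi.single_apply, smul_eq_C_mul]

theorem dirDeriv_monomial (v : σ → R) (ν : σ →₀ ℕ) (a : R) :
    dirDeriv v (monomial ν a) = ∑ i, monomial (ν - Finsupp.single i 1) (v i * (a * ν i)) := by
  simp [dirDeriv_apply, pderiv_monomial, smul_monomial]

end DirDeriv

theorem hasDerivAt_eval_comp {σ 𝕜 : Type*} [Fintype σ] [NontriviallyNormedField 𝕜]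
    (f : MvPolynomial σ 𝕜) {γ : 𝕜 → σ → 𝕜} {γ' : σ → 𝕜} {t : 𝕜} (hγ : HasDerivAt γ γ' t) :
    HasDerivAt (fun s => eval (γ s) f) (eval (γ t) (dirDeriv γ' f)) t := by
  induction f using MvPolynomial.induction_on with
  | C a => simpa using hasDerivAt_const t a
  | add p q hp hq => simpa using hp.fun_add hq
  | mul_X p i hp =>
    simp only [eval_mul, eval_X]
    refine (hp.fun_mul (hasDerivAt_pi.1 hγ i)).congr_deriv ?_
    rw [Derivation.leibniz, dirDeriv_X]
    simp only [smul_eq_mul, map_add, eval_mul, eval_C, eval_X]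
    ring

end MvPolynomial

section PolynomialBounds

variable {n : ℕ} {y v : Fin n → ℝ} {R V : ℝ}

theorem mdeg_sub_single_one {ν : Fin n →₀ ℕ} {i : Fin n} (h : ν i ≠ 0) :
    mdeg (ν - Finsupp.single i 1) = mdeg ν - 1 := by
  have hle : Finsupp.single i 1 ≤ ν := Finsupp.single_le_iff.2 (Nat.one_le_iff_ne_zero.2 h)
  have := congrArg Finsupp.degree (tsub_add_cancel_of_le hle)
  rw [map_add, Finsupp.degree_single] at this
  exact Nat.eq_sub_of_add_eq this

theorem mdeg_pos_of_ne_zero {ν : Fin n →₀ ℕ} {i : Fin n} (h : ν i ≠ 0) : 0 < mdeg ν :=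
  (Nat.pos_of_ne_zero h).trans_le (Finsupp.le_degree i ν)

theorem cast_mdeg (ν : Fin n →₀ ℕ) : (mdeg ν : ℝ) = ∑ i, (ν i : ℝ) := by
  rw [← Nat.cast_sum, ← Finsupp.degree_eq_sum]; rfl

theorem abs_eval_monomial_le (hy : ∀ i, |y i| ≤ R) (ν : Fin n →₀ ℕ) (a : ℝ) :
    |eval y (monomial ν a)| ≤ |a| * R ^ mdeg ν := by
  rw [eval_monomial, abs_mul, Finsupp.prod, Finset.abs_prod]
  gcongr
  calc ∏ i ∈ ν.support, |y i ^ ν i| ≤ ∏ i ∈ ν.support, R ^ ν i :=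
        Finset.prod_le_prod (fun i _ => abs_nonneg _)
          (fun i _ => abs_pow (y i) (ν i) ▸ pow_le_pow_left₀ (abs_nonneg _) (hy i) _)
    _ = R ^ mdeg ν := Finset.prod_pow_eq_pow_sum _ _ _

theorem abs_eval_dirDeriv_monomial_le (hy : ∀ i, |y i| ≤ R) (hv : ∀ i, |v i| ≤ V)
    (ν : Fin n →₀ ℕ) (a : ℝ) :
    |eval y (dirDeriv v (monomial ν a))| ≤ mdeg ν * |a| * R ^ (mdeg ν - 1) * V := by
  have hterm : ∀ i, |eval y (monomial (ν - Finsupp.single i 1) (v i * (a * ν i)))|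
      ≤ ν i * (|a| * R ^ (mdeg ν - 1) * V) := by
    intro i
    by_cases hi : ν i = 0
    · simp [hi]
    have hR : 0 ≤ R := (abs_nonneg _).trans (hy i)
    calc _ ≤ |v i * (a * ν i)| * R ^ (mdeg ν - 1) := by
          rw [← mdeg_sub_single_one hi]; exact abs_eval_monomial_le hy _ _
      _ = |v i| * (ν i * (|a| * R ^ (mdeg ν - 1))) := by
          rw [abs_mul, abs_mul, Nat.abs_cast]; ring
      _ ≤ V * (ν i * (|a| * R ^ (mdeg ν - 1))) := by gcongr; exact hv i
      _ = _ := by ring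
  rw [dirDeriv_monomial, map_sum]
  calc _ ≤ ∑ i, (ν i : ℝ) * (|a| * R ^ (mdeg ν - 1) * V) :=
        (Finset.abs_sum_le_sum_abs _ _).trans (Finset.sum_le_sum fun i _ => hterm i)
    _ = _ := by rw [← Finset.sum_mul, ← cast_mdeg]; ring

theorem abs_eval_dirDeriv_dirDeriv_monomial_le (hy : ∀ i, |y i| ≤ R) (hv : ∀ i, |v i| ≤ V)
    (ν : Fin n →₀ ℕ) (a : ℝ) :
    |eval y (dirDeriv v (dirDeriv v (monomial ν a)))|
      ≤ mdeg ν * (mdeg ν - 1) * |a| * R ^ (mdeg ν - 2) * V ^ 2 := by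
  have hterm : ∀ i, |eval y (dirDeriv v (monomial (ν - Finsupp.single i 1) (v i * (a * ν i))))|
      ≤ ν i * ((mdeg ν - 1) * |a| * R ^ (mdeg ν - 2) * V ^ 2) := by
    intro i
    by_cases hi : ν i = 0
    · simp [hi]
    have hR : 0 ≤ R := (abs_nonneg _).trans (hy i)
    have hV : 0 ≤ V := (abs_nonneg _).trans (hv i)
    have hj : ((mdeg ν - 1 : ℕ) : ℝ) = mdeg ν - 1 := by
      rw [Nat.cast_sub (mdeg_pos_of_ne_zero hi), Nat.cast_one]
    calc _ ≤ (mdeg ν - 1 : ℕ) * |v i * (a * ν i)| * R ^ (mdeg ν - 1 - 1) * V := by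
          rw [← mdeg_sub_single_one hi]; exact abs_eval_dirDeriv_monomial_le hy hv _ _
      _ = |v i| * (ν i * ((mdeg ν - 1) * |a| * R ^ (mdeg ν - 2) * V)) := by
          rw [abs_mul, abs_mul, Nat.abs_cast, hj, Nat.sub_sub]; ring
      _ ≤ V * (ν i * ((mdeg ν - 1) * |a| * R ^ (mdeg ν - 2) * V)) :=
          mul_le_mul_of_nonneg_right (hv i) (by rw [← hj]; positivity)
      _ = _ := by ring
  rw [dirDeriv_monomial, map_sum, map_sum]
  calc _ ≤ ∑ i, (ν i : ℝ) * ((mdeg ν - 1) * |a| * R ^ (mdeg ν - 2) * V ^ 2) :=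
        (Finset.abs_sum_le_sum_abs _ _).trans (Finset.sum_le_sum fun i _ => hterm i)
    _ = _ := by rw [← Finset.sum_mul, ← cast_mdeg]; ring

theorem abs_eval_dirDeriv_le_Dn_mul (f : MvPolynomial (Fin n) ℝ) (hy : ∀ i, |y i| ≤ R)
    (hv : ∀ i, |v i| ≤ V) (hV : 0 ≤ V) :
    |eval y (dirDeriv v f)| ≤ Dn f R * V := by
  calc _ ≤ ∑ ν ∈ f.support, |eval y (dirDeriv v (monomial ν (f.coeff ν)))| :=
        abs_map_le_sum_abs_map_monomial
          ((eval y).toAddMonoidHom.comp (dirDeriv v).toLinearMap.toAddMonoidHom) f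
    _ ≤ (∑ ν ∈ f.support, (mdeg ν : ℝ) * |f.coeff ν| * R ^ (mdeg ν - 1)) * V := by
        rw [Finset.sum_mul]
        exact Finset.sum_le_sum fun ν _ => abs_eval_dirDeriv_monomial_le hy hv ν _
    _ ≤ Dn f R * V :=
        mul_le_mul_of_nonneg_right ((le_max_left _ _).trans (le_max_right _ _)) hV

theorem abs_eval_dirDeriv_dirDeriv_le_Dn_mul_sq (f : MvPolynomial (Fin n) ℝ)
    (hy : ∀ i, |y i| ≤ R) (hv : ∀ i, |v i| ≤ V) :
    |eval y (dirDeriv v (dirDeriv v f))| ≤ Dn f R * V ^ 2 := by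
  calc _ ≤ ∑ ν ∈ f.support, |eval y (dirDeriv v (dirDeriv v (monomial ν (f.coeff ν))))| :=
        abs_map_le_sum_abs_map_monomial ((eval y).toAddMonoidHom.comp
          ((dirDeriv v).toLinearMap ∘ₗ (dirDeriv v).toLinearMap).toAddMonoidHom) f
    _ ≤ (∑ ν ∈ f.support,
          (mdeg ν : ℝ) * ((mdeg ν : ℝ) - 1) * |f.coeff ν| * R ^ (mdeg ν - 2)) * V ^ 2 := by
        rw [Finset.sum_mul]
        exact Finset.sum_le_sum fun ν _ => abs_eval_dirDeriv_dirDeriv_monomial_le hy hv ν _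
    _ ≤ Dn f R * V ^ 2 :=
        mul_le_mul_of_nonneg_right ((le_max_right _ _).trans (le_max_right _ _)) (sq_nonneg V)

end PolynomialBounds

section Segment

variable {E : Type*}

theorem convexOn_of_convexOn_segment [AddCommGroup E] [Module ℝ E] {X : Set E}
    (hX : Convex ℝ X) {ψ : E → ℝ}
    (h : ∀ x ∈ X, ∀ y ∈ X, ConvexOn ℝ (Icc 0 1) fun t : ℝ => ψ (x + t • (y - x))) :
    ConvexOn ℝ X ψ := by
  refine ⟨hX, fun x hx y hy a b ha hb hab => ?_⟩
  have hseg := (h x hx y hy).2 (left_mem_Icc.2 zero_le_one) (right_mem_Icc.2 zero_le_one)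
    ha hb hab
  have hpt : x + b • (y - x) = a • x + b • y := by
    rw [eq_sub_of_add_eq hab]; module
  simpa [hpt] using hseg

variable [NormedAddCommGroup E] [InnerProductSpace ℝ E]

theorem hasDerivAt_norm_add_smul_sq (w v : E) (t : ℝ) :
    HasDerivAt (fun s : ℝ => ‖w + s • v‖ ^ 2) (2 * inner ℝ (w + t • v) v) t := by
  simpa using (((hasDerivAt_id t).smul_const v).const_add w).norm_sq

theorem hasDerivAt_inner_add_smul (w v : E) (t : ℝ) :
    HasDerivAt (fun s : ℝ => inner ℝ (w + s • v) v) (‖v‖ ^ 2) t := by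
  simpa [real_inner_self_eq_norm_sq] using
    (((hasDerivAt_id t).smul_const v).const_add w).inner ℝ (hasDerivAt_const t v)

theorem strongConvexOn_of_hasDerivAt_segment {X : Set E} (hX : Convex ℝ X) {φ : E → ℝ} {μ : ℝ}
    (h : ∀ x ∈ X, ∀ y ∈ X, ∃ g₁ g₂ : ℝ → ℝ,
      (∀ t ∈ Icc (0 : ℝ) 1, HasDerivAt (fun s => φ (x + s • (y - x))) (g₁ t) t) ∧
      (∀ t ∈ Ioo (0 : ℝ) 1, HasDerivAt g₁ (g₂ t) t) ∧
      ∀ t ∈ Ioo (0 : ℝ) 1, μ * ‖y - x‖ ^ 2 ≤ g₂ t) :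
    StrongConvexOn X μ φ := by
  rw [strongConvexOn_iff_convex]
  refine convexOn_of_convexOn_segment hX fun x hx y hy => ?_
  obtain ⟨g₁, g₂, hg, hg₁, hg₂⟩ := h x hx y hy
  have hd : ∀ t ∈ Icc (0 : ℝ) 1,
      HasDerivAt (fun s => φ (x + s • (y - x)) - μ / 2 * ‖x + s • (y - x)‖ ^ 2)
        (g₁ t - μ / 2 * (2 * inner ℝ (x + t • (y - x)) (y - x))) t := fun t ht =>
    (hg t ht).sub ((hasDerivAt_norm_add_smul_sq x (y - x) t).const_mul _)
  have hd₁ : ∀ t ∈ Ioo (0 : ℝ) 1,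
      HasDerivAt (fun s => g₁ s - μ / 2 * (2 * inner ℝ (x + s • (y - x)) (y - x)))
        (g₂ t - μ / 2 * (2 * ‖y - x‖ ^ 2)) t := fun t ht =>
    (hg₁ t ht).sub (((hasDerivAt_inner_add_smul x (y - x) t).const_mul 2).const_mul _)
  have hint : interior (Icc (0 : ℝ) 1) = Ioo 0 1 := interior_Icc
  refine convexOn_of_hasDerivWithinAt2_nonneg (convex_Icc 0 1)
    (fun t ht => (hd t ht).continuousAt.continuousWithinAt)
    (fun t ht => (hd t (interior_subset ht)).hasDerivWithinAt)
    (fun t ht => (hd₁ t (hint ▸ ht)).hasDerivWithinAt) fun t ht => ?_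
  linarith [hg₂ t (hint ▸ ht)]

end Segment

theorem hasDerivAt_exp_mul {q p : ℝ → ℝ} {q' p' t : ℝ} (hq : HasDerivAt q q' t)
    (hp : HasDerivAt p p' t) :
    HasDerivAt (fun s => exp (q s) * p s) (exp (q t) * (q' * p t + p')) t :=
  (hq.exp.mul hp).congr_deriv (by ring)

theorem exists_hasDerivAt_exp_norm_add_smul_sq_mul {E : Type*} [NormedAddCommGroup E]
    [InnerProductSpace ℝ E] (N : ℝ) (w v : E) {p p₁ p₂ : ℝ → ℝ}
    (hp : ∀ t, HasDerivAt p (p₁ t) t) (hp₁ : ∀ t, HasDerivAt p₁ (p₂ t) t) :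
    ∃ g₁ : ℝ → ℝ, (∀ t, HasDerivAt (fun s => exp (N * ‖w + s • v‖ ^ 2) * p s) (g₁ t) t) ∧
      ∀ t, HasDerivAt g₁ (exp (N * ‖w + t • v‖ ^ 2) *
        ((2 * N * ‖v‖ ^ 2 + (2 * N * inner ℝ (w + t • v) v) ^ 2) * p t
          + 2 * (2 * N * inner ℝ (w + t • v) v) * p₁ t + p₂ t)) t := by
  set a : ℝ → ℝ := fun s => 2 * N * inner ℝ (w + s • v) v
  have hq : ∀ t, HasDerivAt (fun s => N * ‖w + s • v‖ ^ 2) (a t) t := fun t =>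
    ((hasDerivAt_norm_add_smul_sq w v t).const_mul N).congr_deriv (by ring)
  have ha : ∀ t, HasDerivAt a (2 * N * ‖v‖ ^ 2) t := fun t =>
    (hasDerivAt_inner_add_smul w v t).const_mul (2 * N)
  refine ⟨fun s => exp (N * ‖w + s • v‖ ^ 2) * (a s * p s + p₁ s),
    fun t => hasDerivAt_exp_mul (hq t) (hp t), fun t => ?_⟩
  exact (hasDerivAt_exp_mul (hq t) (((ha t).fun_mul (hp t)).fun_add (hp₁ t))).congr_deriv
    (by simp only [a]; ring)

theorem le_exp_mul_second_deriv {m D N Q V p p₁ p₂ a : ℝ} (hm : 0 < m) (hp : m ≤ p)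
    (hp₁ : |p₁| ≤ D * V) (hp₂ : |p₂| ≤ D * V ^ 2) (hN : 0 ≤ N) (hQ : 0 ≤ Q)
    (hμ : 0 ≤ 2 * N * m - D - D ^ 2 / m) :
    (2 * N * m - D - D ^ 2 / m) * V ^ 2
      ≤ exp (N * Q) * ((2 * N * V ^ 2 + a ^ 2) * p + 2 * a * p₁ + p₂) := by
  have hsq : -(p₁ ^ 2 / m) ≤ a ^ 2 * p + 2 * a * p₁ := by
    have : -(p₁ ^ 2 / m) = a ^ 2 * m + 2 * a * p₁ - (a * m + p₁) ^ 2 / m := by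
      field_simp; ring
    rw [this]
    nlinarith [div_nonneg (sq_nonneg (a * m + p₁)) hm.le, sq_nonneg a]
  have hp₁sq : p₁ ^ 2 / m ≤ D ^ 2 * V ^ 2 / m := by
    gcongr
    rw [← sq_abs, ← mul_pow]
    exact pow_le_pow_left₀ (abs_nonneg _) hp₁ 2
  have hB : (2 * N * m - D - D ^ 2 / m) * V ^ 2
      ≤ (2 * N * V ^ 2 + a ^ 2) * p + 2 * a * p₁ + p₂ := by
    have h2N : 2 * N * V ^ 2 * m ≤ 2 * N * V ^ 2 * p := by gcongr
    have hDV : D ^ 2 * V ^ 2 / m = D ^ 2 / m * V ^ 2 := by ring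
    nlinarith [(abs_le.1 hp₂).1]
  exact hB.trans (le_mul_of_one_le_left ((mul_nonneg hμ (sq_nonneg V)).trans hB)
    (one_le_exp (mul_nonneg hN hQ)))

theorem hasDerivAt_euclidean_add_smul {ι : Type*} [Fintype ι] (x v : EuclideanSpace ℝ ι)
    (t : ℝ) : HasDerivAt (fun s : ℝ => fun i => (x + s • v) i) (fun i => v i) t :=
  hasDerivAt_pi.2 fun i => by simpa using ((hasDerivAt_id t).mul_const (v i)).const_add (x i)

theorem stmt2_general {n : ℕ} (X : Set (EuclideanSpace ℝ (Fin n)))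
    (hXcon : Convex ℝ X)
    (f : MvPolynomial (Fin n) ℝ)
    (R : ℝ) (hR : IsGreatest ((fun x => ‖x‖) '' X) R)
    (m : ℝ) (hm : 0 < m) (hmf : ∀ x ∈ X, m ≤ MvPolynomial.eval (fun i => x i) f) :
    ∀ ξ : EuclideanSpace ℝ (Fin n), ∀ D : ℝ, Dn f R ≤ D →
      ∀ N : ℝ, D / (2 * m) + D ^ 2 / (2 * m ^ 2) < N →
        ∃ μ > 0, StrongConvexOn X μ
          (fun x => Real.exp (N * ‖x - ξ‖ ^ 2) * MvPolynomial.eval (fun i => x i) f) := by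
  intro ξ D hD N hN
  have hD₀ : 0 < D := one_pos.trans_le ((le_max_left _ _).trans hD)
  have hN₀ : 0 ≤ N := le_trans (by positivity) hN.le
  have hμ : 0 < 2 * N * m - D - D ^ 2 / m := by
    have : 2 * N * m - D - D ^ 2 / m = 2 * m * (N - (D / (2 * m) + D ^ 2 / (2 * m ^ 2))) := by
      field_simp; ring
    rw [this]; exact mul_pos (by positivity) (sub_pos.2 hN)
  refine ⟨_, hμ, strongConvexOn_of_hasDerivAt_segment hXcon fun x hx y hy => ?_⟩
  have hγ := hasDerivAt_euclidean_add_smul x (y - x)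
  obtain ⟨g₁, hg, hg₁⟩ := exists_hasDerivAt_exp_norm_add_smul_sq_mul N (x - ξ) (y - x)
    (fun t => hasDerivAt_eval_comp f (hγ t))
    (fun t => hasDerivAt_eval_comp (dirDeriv _ f) (hγ t))
  refine ⟨g₁, _, fun t _ => ?_, fun t _ => hg₁ t, fun t ht => ?_⟩
  · simpa only [add_sub_right_comm] using hg t
  · have hz : x + t • (y - x) ∈ X := hXcon.add_smul_sub_mem hx hy (Ioo_subset_Icc_self ht)
    have hzR : ∀ i, |(x + t • (y - x)) i| ≤ R := fun i =>
      (PiLp.norm_apply_le _ i).trans (hR.2 ⟨_, hz, rfl⟩)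
    have hv : ∀ i, |(y - x) i| ≤ ‖y - x‖ := PiLp.norm_apply_le (y - x)
    exact le_exp_mul_second_deriv hm (hmf _ hz)
      ((abs_eval_dirDeriv_le_Dn_mul f hzR hv (norm_nonneg _)).trans (by gcongr))
      ((abs_eval_dirDeriv_dirDeriv_le_Dn_mul_sq f hzR hv).trans (by gcongr)) hN₀ (sq_nonneg _) hμ.le

/-- If a real polynomial `f` is positive on a compact convex `X ⊆ ℝⁿ`,
`R = max{|x| : x ∈ X}` and `0 < m ≤ min f(X)`, then for any `ξ ∈ ℝⁿ`, any
`D ≥ D_n(f,R)` and any `N > D/(2m) + D²/(2m²)`, the function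
`φ(x) = e^{N|x-ξ|²} f(x)` is strongly convex on `X`. -/
theorem stmt2 {n : ℕ} (X : Set (EuclideanSpace ℝ (Fin n)))
    (hXc : IsCompact X) (hXcon : Convex ℝ X)
    (f : MvPolynomial (Fin n) ℝ)
    (hpos : ∀ x ∈ X, 0 < MvPolynomial.eval (fun i => x i) f)
    (R : ℝ) (hR : IsGreatest ((fun x => ‖x‖) '' X) R)
    (m : ℝ) (hm : 0 < m) (hmf : ∀ x ∈ X, m ≤ MvPolynomial.eval (fun i => x i) f) :
    ∀ ξ : EuclideanSpace ℝ (Fin n), ∀ D : ℝ, Dn f R ≤ D →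
      ∀ N : ℝ, D / (2 * m) + D ^ 2 / (2 * m ^ 2) < N →
        ∃ μ > 0, StrongConvexOn X μ
          (fun x => Real.exp (N * ‖x - ξ‖ ^ 2) * MvPolynomial.eval (fun i => x i) f) :=
  stmt2_general X hXcon f R hR m hm hmf
end

section
/- Let f ∈ ℝ[x₁,…,xₙ] have degree d > 0 with leading form f_d satisfying f_d(x) > 0 for all x ≠ 0, and write f_{d*} = min{f_d(x) : |x|=1} > 0. Define ‖f‖ = Σ_ν |a_ν|, 𝕂(f) = 2‖f‖/f_{d*}, and m(f) = f_{d*} - Σ_{j=0}^{d-1} 𝕂(f)^{j-d} Σ_{|ν|=j} |a_ν|. Then m(f) > 0 and f(x) ≥ m(f)|x|^d for every x ∈ ℝⁿ with |x| ≥ 𝕂(f). -/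
open Real Set MvPolynomial

/-- `‖f‖ = Σ_ν |a_ν|`. -/
noncomputable def coeffNorm {n : ℕ} (f : MvPolynomial (Fin n) ℝ) : ℝ :=
  ∑ ν ∈ f.support, |f.coeff ν|

/-- `Σ_{|ν|=j} |a_ν|`. -/
noncomputable def coeffSum {n : ℕ} (f : MvPolynomial (Fin n) ℝ) (j : ℕ) : ℝ :=
  ∑ ν ∈ f.support.filter (fun ν => mdeg ν = j), |f.coeff ν|

/-! The leading form dominates on the region `‖x‖ ≥ K` because each term of degree `j < d`
satisfies `|f_j(x)| ≤ (Σ_{|ν|=j} |a_ν|) ‖x‖^j ≤ K^{j-d} (Σ_{|ν|=j} |a_ν|) ‖x‖^d`, while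
`f_d(x) ≥ f_{d*} ‖x‖^d` by homogeneity. For `K = 2‖f‖/f_{d*}`, which is `≥ 2` since
`f_{d*} ≤ ‖f‖`, the total error is at most `‖f‖/K = f_{d*}/2`, whence `m(f) ≥ f_{d*}/2 > 0`. -/

open Finset

lemma mdeg_eq_degree {n : ℕ} (ν : Fin n →₀ ℕ) : mdeg ν = ν.degree := rfl

lemma MvPolynomial.IsHomogeneous.eval_smul {σ R : Type*} [Fintype σ] [CommSemiring R]
    {φ : MvPolynomial σ R} {m : ℕ} (hφ : φ.IsHomogeneous m) (c : R) (x : σ → R) :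
    eval (c • x) φ = c ^ m * eval x φ := by
  rw [eval_eq', eval_eq', mul_sum]
  refine sum_congr rfl fun ν hν => ?_
  have hdeg : ∑ i, ν i = m := by
    rw [← Finsupp.degree_eq_sum, Finsupp.degree_eq_weight_one]
    exact hφ (mem_support_iff.mp hν)
  simp only [Pi.smul_apply, smul_eq_mul, mul_pow, prod_mul_distrib, prod_pow_eq_pow_sum, hdeg]
  ring

lemma eval_eq_eval_homogeneousComponent_add_sum {σ R : Type*} [CommSemiring R]
    {f : MvPolynomial σ R} {d : ℕ} (hd : f.totalDegree = d) (x : σ → R) :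
    eval x f = eval x (homogeneousComponent d f) +
      ∑ j ∈ range d, eval x (homogeneousComponent j f) := by
  conv_lhs => rw [← sum_homogeneousComponent f]
  rw [hd, map_sum, sum_range_succ, add_comm]

lemma abs_prod_pow_le {ι : Type*} [Fintype ι] (ν : ι →₀ ℕ) {x : ι → ℝ} {r : ℝ}
    (hx : ∀ i, |x i| ≤ r) : |∏ i, x i ^ ν i| ≤ r ^ ν.degree := by
  rw [abs_prod, Finsupp.degree_eq_sum, ← prod_pow_eq_pow_sum]
  exact prod_le_prod (fun i _ => abs_nonneg _)
    fun i _ => (abs_pow (x i) (ν i)).trans_le (pow_le_pow_left₀ (abs_nonneg _) (hx i) _)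

lemma mul_norm_pow_le_eval_of_forall_norm_eq_one {ι : Type*} [Fintype ι]
    {φ : MvPolynomial ι ℝ} {d : ℕ} (hφ : φ.IsHomogeneous d) {c : ℝ}
    (hc : ∀ u : EuclideanSpace ℝ ι, ‖u‖ = 1 → c ≤ eval (fun i => u i) φ)
    {x : EuclideanSpace ℝ ι} (hx : x ≠ 0) :
    c * ‖x‖ ^ d ≤ eval (fun i => x i) φ := by
  have hnorm : ‖x‖ ≠ 0 := norm_ne_zero_iff.mpr hx
  have hxu : (fun i => x i) = ‖x‖ • fun i => (‖x‖⁻¹ • x) i := by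
    funext i
    simp [hnorm]
  rw [hxu, hφ.eval_smul, mul_comm]
  exact mul_le_mul_of_nonneg_left (hc _ (norm_smul_inv_norm hx)) (by positivity)

section coeffSum

variable {n : ℕ} (f : MvPolynomial (Fin n) ℝ)

lemma coeffSum_nonneg (j : ℕ) : 0 ≤ coeffSum f j :=
  sum_nonneg fun _ _ => abs_nonneg _

lemma sum_coeffSum_le_coeffNorm (s : Finset ℕ) : ∑ j ∈ s, coeffSum f j ≤ coeffNorm f :=
  sum_fiberwise_le_sum_of_sum_fiber_nonneg fun _ _ => sum_nonneg fun _ _ => abs_nonneg _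

lemma abs_eval_homogeneousComponent_le (j : ℕ) {x : Fin n → ℝ} {r : ℝ}
    (hx : ∀ i, |x i| ≤ r) :
    |eval x (homogeneousComponent j f)| ≤ coeffSum f j * r ^ j := by
  rw [homogeneousComponent_apply, map_sum, coeffSum, sum_mul]
  simp only [mdeg_eq_degree]
  refine (abs_sum_le_sum_abs _ _).trans (sum_le_sum fun ν hν => ?_)
  rw [eval_monomial, Finsupp.prod_fintype _ _ fun _ => pow_zero _, abs_mul, ← (mem_filter.mp hν).2]
  exact mul_le_mul_of_nonneg_left (abs_prod_pow_le ν hx) (abs_nonneg _)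

lemma eval_homogeneousComponent_le_coeffNorm (j : ℕ) {u : EuclideanSpace ℝ (Fin n)}
    (hu : ‖u‖ = 1) : eval (fun i => u i) (homogeneousComponent j f) ≤ coeffNorm f := by
  have hbound := abs_eval_homogeneousComponent_le f j fun i => hu ▸ u.norm_apply_le i
  calc eval (fun i => u i) (homogeneousComponent j f)
      ≤ coeffSum f j := by simpa using (le_abs_self _).trans hbound
    _ ≤ coeffNorm f := by simpa using sum_coeffSum_le_coeffNorm f {j}

lemma sum_zpow_mul_coeffSum_le (d : ℕ) {K : ℝ} (hK : 1 ≤ K) :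
    ∑ j ∈ range d, K ^ ((j : ℤ) - d) * coeffSum f j ≤ coeffNorm f / K := by
  have hterm : ∀ j ∈ range d, K ^ ((j : ℤ) - d) * coeffSum f j ≤ K⁻¹ * coeffSum f j := by
    intro j hj
    have hexp : (j : ℤ) - d ≤ -1 := by have := mem_range.mp hj; omega
    refine mul_le_mul_of_nonneg_right ?_ (coeffSum_nonneg f j)
    simpa using zpow_le_zpow_right₀ hK hexp
  calc ∑ j ∈ range d, K ^ ((j : ℤ) - d) * coeffSum f j
      ≤ K⁻¹ * ∑ j ∈ range d, coeffSum f j := by rw [mul_sum]; exact sum_le_sum hterm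
    _ ≤ K⁻¹ * coeffNorm f :=
        mul_le_mul_of_nonneg_left (sum_coeffSum_le_coeffNorm f _) (by positivity)
    _ = coeffNorm f / K := inv_mul_eq_div _ _

end coeffSum

lemma pow_le_zpow_sub_mul_pow {K t : ℝ} (hK : 0 < K) (hKt : K ≤ t) {j d : ℕ} (hjd : j ≤ d) :
    t ^ j ≤ K ^ ((j : ℤ) - d) * t ^ d := by
  have hzpow : K ^ ((j : ℤ) - d) = (K ^ (d - j))⁻¹ := by
    rw [← zpow_natCast, ← zpow_neg, Nat.cast_sub hjd, neg_sub]
  rw [hzpow, inv_mul_eq_div, le_div_iff₀ (by positivity)]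
  calc t ^ j * K ^ (d - j) ≤ t ^ j * t ^ (d - j) :=
        mul_le_mul_of_nonneg_left (pow_le_pow_left₀ hK.le hKt _)
          (pow_nonneg (hK.le.trans hKt) _)
    _ = t ^ d := by rw [← pow_add, Nat.add_sub_cancel' hjd]

theorem mul_norm_pow_le_eval {n : ℕ} {f : MvPolynomial (Fin n) ℝ} {d : ℕ}
    (hd : f.totalDegree = d) {c : ℝ}
    (hc : ∀ u : EuclideanSpace ℝ (Fin n), ‖u‖ = 1 →
      c ≤ eval (fun i => u i) (homogeneousComponent d f))
    {K : ℝ} (hK : 0 < K) {x : EuclideanSpace ℝ (Fin n)} (hx : K ≤ ‖x‖) :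
    (c - ∑ j ∈ range d, K ^ ((j : ℤ) - d) * coeffSum f j) * ‖x‖ ^ d ≤
      eval (fun i => x i) f := by
  have hx0 : x ≠ 0 := norm_pos_iff.mp (hK.trans_le hx)
  have hlead := mul_norm_pow_le_eval_of_forall_norm_eq_one
    (homogeneousComponent_isHomogeneous d f) hc hx0
  have hlow : ∀ j ∈ range d, -(K ^ ((j : ℤ) - d) * coeffSum f j * ‖x‖ ^ d) ≤
      eval (fun i => x i) (homogeneousComponent j f) := by
    intro j hj
    have hbound := abs_eval_homogeneousComponent_le f j fun i => x.norm_apply_le i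
    have hpow := pow_le_zpow_sub_mul_pow hK hx (mem_range.mp hj).le
    have := mul_le_mul_of_nonneg_left hpow (coeffSum_nonneg f j)
    linarith [neg_abs_le (eval (fun i => x i) (homogeneousComponent j f))]
  rw [eval_eq_eval_homogeneousComponent_add_sum hd, sub_mul, sum_mul]
  linarith [sum_le_sum hlow, sum_neg_distrib (s := range d)
    (f := fun j => K ^ ((j : ℤ) - d) * coeffSum f j * ‖x‖ ^ d)]

theorem stmt7_general {n : ℕ} (f : MvPolynomial (Fin n) ℝ) (d : ℕ)
    (hd : f.totalDegree = d)
    (fstar : ℝ) (hfstarpos : 0 < fstar)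
    (hfstar : IsLeast
      ((fun x : EuclideanSpace ℝ (Fin n) =>
        MvPolynomial.eval (fun i => x i) (MvPolynomial.homogeneousComponent d f)) ''
        {x | ‖x‖ = 1}) fstar) :
    0 < fstar - ∑ j ∈ Finset.range d,
        (2 * coeffNorm f / fstar) ^ ((j : ℤ) - (d : ℤ)) * coeffSum f j ∧
    ∀ x : EuclideanSpace ℝ (Fin n), 2 * coeffNorm f / fstar ≤ ‖x‖ →
      (fstar - ∑ j ∈ Finset.range d,
          (2 * coeffNorm f / fstar) ^ ((j : ℤ) - (d : ℤ)) * coeffSum f j) * ‖x‖ ^ d ≤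
        MvPolynomial.eval (fun i => x i) f := by
  have hfstarN : fstar ≤ coeffNorm f := by
    obtain ⟨u, hu, hfu⟩ := hfstar.1
    exact hfu ▸ eval_homogeneousComponent_le_coeffNorm f d hu
  have hK : 1 ≤ 2 * coeffNorm f / fstar := by
    rw [le_div_iff₀ hfstarpos]
    linarith
  refine ⟨?_, fun x hx => mul_norm_pow_le_eval hd (fun u hu => hfstar.2 ⟨u, hu, rfl⟩)
    (one_pos.trans_le hK) hx⟩
  have herror := sum_zpow_mul_coeffSum_le f d hK
  have hhalf : coeffNorm f / (2 * coeffNorm f / fstar) = fstar / 2 := by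
    field_simp [(hfstarpos.trans_le hfstarN).ne']
  linarith

/-- Let `f` have degree `d > 0`, leading form `f_d > 0` off `0`, and
`f_{d*} = min{f_d(x) : |x|=1} > 0`. With `𝕂(f) = 2‖f‖/f_{d*}` and
`m(f) = f_{d*} - Σ_{j=0}^{d-1} 𝕂(f)^{j-d} Σ_{|ν|=j}|a_ν|`, one has `m(f) > 0` and
`f(x) ≥ m(f)|x|^d` whenever `|x| ≥ 𝕂(f)`. -/
theorem stmt7 {n : ℕ} (f : MvPolynomial (Fin n) ℝ) (d : ℕ)
    (hd : f.totalDegree = d) (hdpos : 0 < d)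
    (hpos : ∀ x : EuclideanSpace ℝ (Fin n), x ≠ 0 →
      0 < MvPolynomial.eval (fun i => x i) (MvPolynomial.homogeneousComponent d f))
    (fstar : ℝ) (hfstarpos : 0 < fstar)
    (hfstar : IsLeast
      ((fun x : EuclideanSpace ℝ (Fin n) =>
        MvPolynomial.eval (fun i => x i) (MvPolynomial.homogeneousComponent d f)) ''
        {x | ‖x‖ = 1}) fstar) :
    0 < fstar - ∑ j ∈ Finset.range d,
        (2 * coeffNorm f / fstar) ^ ((j : ℤ) - (d : ℤ)) * coeffSum f j ∧
    ∀ x : EuclideanSpace ℝ (Fin n), 2 * coeffNorm f / fstar ≤ ‖x‖ →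
      (fstar - ∑ j ∈ Finset.range d,
          (2 * coeffNorm f / fstar) ^ ((j : ℤ) - (d : ℤ)) * coeffSum f j) * ‖x‖ ^ d ≤
        MvPolynomial.eval (fun i => x i) f :=
  stmt7_general f d hd fstar hfstarpos hfstar
end

section
/- Let X ⊆ ℝⁿ be a convex closed set and f a polynomial of degree d > 0 whose leading form f_d vanishes only at 0 (i.e., f_d(x) ≠ 0 for x ≠ 0), and suppose inf{f(x) : x ∈ X} ≥ m for some m > 0. Then there exists N₀ ∈ ℕ such that for every integer N ≥ N₀ and every ξ ∈ ℝⁿ, the function φ(x) = e^{N|x-ξ|²} f(x) is strongly convex on X. -/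
/-!
Restrict `φ` to a segment `t ↦ x + t v` of `X` and put `q = f(x + t v)`, `B = 1 + ‖x + t v‖`.
With `P = N ‖x + t v - ξ‖²`, one has `φ'' = e^P ((P' q + q')² / q - q'² / q + 2 N ‖v‖² q + q'')`,
and `|q'| ≤ C₁ ‖v‖ Bᵈ`, `|q''| ≤ C₂ ‖v‖² Bᵈ`. Because the leading form vanishes only at `0` and
`f ≥ m > 0` on `X`, also `f ≥ c Bᵈ` on `X`. Hence `φ'' ≥ m ‖v‖²` as soon as
`N ≥ 1 + C₂ / c + (C₁ / c)²`, uniformly in `ξ` since `e^P ≥ 1`.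
-/

open Real Set MvPolynomial

namespace MvPolynomial

variable {σ : Type*}

theorem totalDegree_pderiv_le {R : Type*} [CommSemiring R] (p : MvPolynomial σ R) (i : σ) :
    (pderiv i p).totalDegree ≤ p.totalDegree := by
  classical
  conv_lhs => rw [p.as_sum]
  rw [map_sum]
  refine (totalDegree_finsetSum _ _).trans (Finset.sup_le fun s hs => ?_)
  rw [pderiv_monomial]
  refine (totalDegree_monomial_le _ _).trans (le_trans ?_ (le_totalDegree hs))
  rw [Finsupp.sum_of_support_subset _ Finsupp.support_tsub _ fun _ _ => rfl]
  exact Finset.sum_le_sum fun j _ => tsub_le_self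

theorem totalDegree_sub_homogeneousComponent_le {R : Type*} [CommRing R]
    {p : MvPolynomial σ R} {d : ℕ} (hp : p.totalDegree ≤ d) :
    (p - homogeneousComponent d p).totalDegree ≤ d - 1 := by
  refine Finset.sup_le fun s hs => ?_
  have hs' := mem_support_iff.mp hs
  rw [coeff_sub, coeff_homogeneousComponent] at hs'
  by_cases hsd : s.degree = d
  · simp [hsd] at hs'
  · simp only [hsd, if_false, sub_zero] at hs'
    have : s.degree ≤ d := hp.trans' (le_totalDegree (mem_support_iff.mpr hs'))
    change s.degree ≤ d - 1
    omega

theorem IsHomogeneous.eval_smul_s8 {R : Type*} [CommSemiring R] {p : MvPolynomial σ R} {k : ℕ}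
    (hp : p.IsHomogeneous k) (t : R) (w : σ → R) :
    eval (t • w) p = t ^ k * eval w p := by
  rw [eval_eq, eval_eq, Finset.mul_sum]
  refine Finset.sum_congr rfl fun s hs => ?_
  have hsk : ∑ i ∈ s.support, s i = k := by
    by_contra h
    exact mem_support_iff.mp hs (hp.coeff_eq_zero h)
  simp only [Pi.smul_apply, smul_eq_mul, mul_pow, Finset.prod_mul_distrib,
    Finset.prod_pow_eq_pow_sum, hsk]
  ring

theorem exists_abs_eval_le {p : MvPolynomial σ ℝ} {k : ℕ} (hp : p.totalDegree ≤ k) :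
    ∃ C, 0 ≤ C ∧ ∀ (w : σ → ℝ) (B : ℝ), 1 ≤ B → (∀ i, |w i| ≤ B) →
      |eval w p| ≤ C * B ^ k := by
  refine ⟨∑ s ∈ p.support, |coeff s p|, Finset.sum_nonneg fun _ _ => abs_nonneg _,
    fun w B hB hw => ?_⟩
  rw [eval_eq, Finset.sum_mul]
  refine (Finset.abs_sum_le_sum_abs _ _).trans (Finset.sum_le_sum fun s hs => ?_)
  rw [abs_mul, Finset.abs_prod]
  gcongr
  calc ∏ i ∈ s.support, |w i ^ s i| ≤ ∏ i ∈ s.support, B ^ s i :=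
        Finset.prod_le_prod (fun _ _ => abs_nonneg _) fun i _ => by
          rw [abs_pow]; exact pow_le_pow_left₀ (abs_nonneg _) (hw i) _
    _ = B ^ s.degree := Finset.prod_pow_eq_pow_sum _ _ _
    _ ≤ B ^ k := pow_le_pow_right₀ hB ((le_totalDegree hs).trans hp)

theorem exists_abs_sum_mul_eval_le {ι : Type*} [Fintype ι] {p : ι → MvPolynomial σ ℝ} {k : ℕ}
    (hp : ∀ j, (p j).totalDegree ≤ k) :
    ∃ C, 0 ≤ C ∧ ∀ (c : ι → ℝ) (W : ℝ) (w : σ → ℝ) (B : ℝ), 1 ≤ B → (∀ i, |w i| ≤ B) →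
      (∀ j, |c j| ≤ W) → |∑ j, c j * eval w (p j)| ≤ C * W * B ^ k := by
  choose C hC0 hC using fun j => exists_abs_eval_le (hp j)
  refine ⟨∑ j, C j, Finset.sum_nonneg fun j _ => hC0 j, fun c W w B hB hw hc => ?_⟩
  rw [Finset.sum_mul, Finset.sum_mul]
  refine (Finset.abs_sum_le_sum_abs _ _).trans (Finset.sum_le_sum fun j _ => ?_)
  rw [abs_mul, mul_comm (C j), mul_assoc]
  exact mul_le_mul (hc j) (hC j w B hB hw) (abs_nonneg _) ((abs_nonneg _).trans (hc j))

theorem hasDerivAt_eval_add_smul [Fintype σ] (p : MvPolynomial σ ℝ) (x v : σ → ℝ) (t : ℝ) :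
    HasDerivAt (fun s : ℝ => eval (x + s • v) p)
      (∑ i, v i * eval (x + t • v) (pderiv i p)) t := by
  classical
  induction p using MvPolynomial.induction_on with
  | C a => simpa using hasDerivAt_const t a
  | add p q hp hq =>
    simp only [map_add]
    exact (hp.add hq).congr_deriv (by simp [mul_add, Finset.sum_add_distrib])
  | mul_X p j hp =>
    have hX : HasDerivAt (fun s : ℝ => x j + s * v j) (v j) t := by
      simpa using ((hasDerivAt_id t).mul_const (v j)).const_add (x j)
    simp only [map_mul, eval_X, Pi.add_apply, Pi.smul_apply, smul_eq_mul]
    refine (hp.mul hX).congr_deriv ?_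
    have hterm : ∀ i, v i * eval (x + t • v) (pderiv i (p * X j)) =
        v i * eval (x + t • v) (pderiv i p) * (x j + t * v j) +
          if j = i then eval (x + t • v) p * v j else 0 := by
      intro i
      by_cases h : j = i
      · subst h; simp; ring
      · simp [pderiv_X_of_ne h, h]; ring
    simp only [hterm, Finset.sum_add_distrib, Finset.sum_ite_eq, Finset.mem_univ, if_true,
      Finset.sum_mul]

end MvPolynomial

theorem strongConvexOn_of_hasDerivAt_line {E : Type*} [NormedAddCommGroup E] [NormedSpace ℝ E]
    {s : Set E} (hs : Convex ℝ s) {φ : E → ℝ} {μ : ℝ}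
    (h : ∀ x ∈ s, ∀ y ∈ s, ∃ g' g'' : ℝ → ℝ,
      (∀ t, HasDerivAt (fun t => φ (x + t • (y - x))) (g' t) t) ∧
      (∀ t, HasDerivAt g' (g'' t) t) ∧ ∀ t ∈ Icc (0 : ℝ) 1, μ * ‖y - x‖ ^ 2 ≤ g'' t) :
    StrongConvexOn s μ φ := by
  refine ⟨hs, fun x hx y hy a b ha hb hab => ?_⟩
  obtain rfl : a = 1 - b := eq_sub_of_add_eq hab
  obtain ⟨g', g'', hg', hg'', hbound⟩ := h x hx y hy
  set K := μ * ‖y - x‖ ^ 2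
  have hconv : ConvexOn ℝ (Icc 0 1) fun t => φ (x + t • (y - x)) - K / 2 * t ^ 2 := by
    refine convexOn_of_hasDerivWithinAt2_nonneg (convex_Icc 0 1) (f' := fun t => g' t - K * t)
      (f'' := fun t => g'' t - K) ?_ (fun t _ => ?_) (fun t _ => ?_) fun t ht => ?_
    · exact fun t _ =>
        ((hg' t).sub ((hasDerivAt_pow 2 t).const_mul _)).continuousAt.continuousWithinAt
    · exact ((hg' t).sub ((hasDerivAt_pow 2 t).const_mul _)).hasDerivWithinAt.congr_deriv
        (by ring)
    · exact ((hg'' t).sub ((hasDerivAt_id t).const_mul K)).hasDerivWithinAt.congr_deriv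
        (by simp)
    · exact sub_nonneg.2 (hbound t (interior_subset ht))
  have key := hconv.2 (left_mem_Icc.2 zero_le_one) (right_mem_Icc.2 zero_le_one) ha hb hab
  have hxy : (1 - b) • x + b • y = x + b • (y - x) := by module
  simp only [smul_eq_mul, mul_zero, mul_one, zero_add, zero_smul, add_zero, one_smul,
    add_sub_cancel] at key
  rw [hxy, norm_sub_rev, smul_eq_mul, smul_eq_mul]
  linear_combination key

theorem HasDerivAt.exp_mul {P q : ℝ → ℝ} {P' q' t : ℝ} (hP : HasDerivAt P P' t)
    (hq : HasDerivAt q q' t) :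
    HasDerivAt (fun s => Real.exp (P s) * q s) (Real.exp (P t) * (P' * q t + q')) t :=
  (hP.exp.mul hq).congr_deriv (by ring)

theorem mul_sq_le_of_growth_bounds {m c C₁ C₂ N A V q q₁ q₂ : ℝ} (hm : 0 < m) (hc : 0 < c)
    (hC₂ : 0 ≤ C₂) (hN : 1 + C₂ / c + (C₁ / c) ^ 2 ≤ N) (hmq : m ≤ q) (hA : 0 ≤ A)
    (hcq : c * A ≤ q) (hq₁ : |q₁| ≤ C₁ * V * A) (hq₂ : |q₂| ≤ C₂ * V ^ 2 * A) (p : ℝ) :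
    m * V ^ 2 ≤ p * (p * q + q₁) + (N * (2 * V ^ 2) * q + p * q₁ + q₂) := by
  have hq : 0 < q := hm.trans_le hmq
  have hAq : A ≤ q / c := (le_div_iff₀' hc).2 hcq
  have hkey : (m + C₂ * A) * q + (C₁ * A) ^ 2 ≤ N * q ^ 2 :=
    calc (m + C₂ * A) * q + (C₁ * A) ^ 2 ≤ (q + C₂ * (q / c)) * q + (C₁ * (q / c)) ^ 2 := by
          rw [mul_pow, mul_pow C₁]; gcongr
      _ = (1 + C₂ / c + (C₁ / c) ^ 2) * q ^ 2 := by field_simp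
      _ ≤ N * q ^ 2 := by gcongr
  have hsq : q₁ ^ 2 ≤ (C₁ * V * A) ^ 2 := sq_le_sq' (abs_le.1 hq₁).1 (abs_le.1 hq₁).2
  have hq₂' : -(C₂ * V ^ 2 * A) ≤ q₂ := (abs_le.1 hq₂).1
  have hN₀ : 0 ≤ N * V ^ 2 * q ^ 2 := by
    have : 0 ≤ N := le_trans (by positivity) hN
    positivity
  refine le_of_mul_le_mul_right ?_ hq
  -- multiplied by `q`, the right side is `(p q + q₁)² - q₁² + 2 N V² q² + q₂ q`
  nlinarith [sq_nonneg (p * q + q₁), mul_le_mul_of_nonneg_right hq₂' hq.le,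
    mul_le_mul_of_nonneg_left hkey (sq_nonneg V)]

section Euclidean

variable {σ : Type*} [Fintype σ]

theorem exists_pos_mul_norm_pow_le_abs_eval {p : MvPolynomial σ ℝ} {d : ℕ}
    (hp : p.IsHomogeneous d) (hp0 : ∀ x : EuclideanSpace ℝ σ, x ≠ 0 → eval (fun i => x i) p ≠ 0) :
    ∃ c > 0, ∀ x : EuclideanSpace ℝ σ, x ≠ 0 → c * ‖x‖ ^ d ≤ |eval (fun i => x i) p| := by
  have hcont : Continuous fun u : EuclideanSpace ℝ σ => |eval (fun i => u i) p| :=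
    ((continuous_eval p).comp (PiLp.continuous_ofLp 2 _)).abs
  obtain ⟨c, hc, hcS⟩ := (isCompact_sphere (0 : EuclideanSpace ℝ σ) 1).exists_forall_le'
    hcont.continuousOn fun u hu => abs_pos.2 (hp0 u (ne_zero_of_mem_unit_sphere ⟨u, hu⟩))
  refine ⟨c, hc, fun x hx => ?_⟩
  have hx' : 0 < ‖x‖ := norm_pos_iff.2 hx
  have hscale : (fun i => x i) = ‖x‖ • fun i => (‖x‖⁻¹ • x) i := by
    ext i; simp [hx'.ne']
  rw [hscale, hp.eval_smul_s8, abs_mul, abs_pow, abs_norm, mul_comm]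
  exact mul_le_mul_of_nonneg_left (hcS _ (by simp [norm_smul, hx'.ne'])) (by positivity)

theorem exists_pos_mul_one_add_norm_pow_le_eval {X : Set (EuclideanSpace ℝ σ)}
    {f : MvPolynomial σ ℝ} {d : ℕ} (hf : f.totalDegree ≤ d) (hd : 0 < d)
    (hlead : ∀ x : EuclideanSpace ℝ σ, x ≠ 0 →
      eval (fun i => x i) (homogeneousComponent d f) ≠ 0)
    {m : ℝ} (hm : 0 < m) (hmf : ∀ x ∈ X, m ≤ eval (fun i => x i) f) :
    ∃ c > 0, ∀ x ∈ X, c * (1 + ‖x‖) ^ d ≤ eval (fun i => x i) f := by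
  obtain ⟨c₀, hc₀, hlow⟩ :=
    exists_pos_mul_norm_pow_le_abs_eval (homogeneousComponent_isHomogeneous d f) hlead
  obtain ⟨C, -, hrem⟩ := exists_abs_eval_le (totalDegree_sub_homogeneousComponent_le hf)
  set c₁ := c₀ / 2 ^ (d + 1)
  set R := max 2 (C / c₁)
  have hR : 2 ≤ R := le_max_left _ _
  refine ⟨min c₁ (m / R ^ d), by positivity, fun x hx => ?_⟩
  set B := 1 + ‖x‖
  by_cases hBR : B ≤ R
  · calc min c₁ (m / R ^ d) * B ^ d ≤ m / R ^ d * R ^ d := by gcongr; exact min_le_right _ _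
      _ = m := div_mul_cancel₀ _ (by positivity)
      _ ≤ _ := hmf x hx
  push Not at hBR
  have hx1 : 1 ≤ ‖x‖ := by linarith
  have hx0 : x ≠ 0 := norm_pos_iff.1 (by linarith)
  have hlead : 2 * c₁ * B ^ d ≤ |eval (fun i => x i) (homogeneousComponent d f)| := by
    calc 2 * c₁ * B ^ d = c₀ * (B / 2) ^ d := by simp only [c₁, div_pow, pow_succ]; field_simp
      _ ≤ c₀ * ‖x‖ ^ d := by gcongr; linarith
      _ ≤ _ := hlow x hx0
  have hremx : |eval (fun i => x i) f - eval (fun i => x i) (homogeneousComponent d f)|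
      ≤ c₁ * B ^ d := by
    have hCB : C ≤ c₁ * B := (div_le_iff₀' (by positivity)).1 ((le_max_right _ _).trans hBR.le)
    calc _ ≤ C * B ^ (d - 1) := by
          rw [← map_sub]
          exact hrem _ B (by linarith) fun i => (PiLp.norm_apply_le x i).trans (by linarith)
      _ ≤ c₁ * B * B ^ (d - 1) := by gcongr
      _ = c₁ * B ^ d := by rw [mul_assoc, ← pow_succ', Nat.sub_add_cancel hd]
  have hfx : 0 ≤ eval (fun i => x i) f := hm.le.trans (hmf x hx)
  have := abs_sub_abs_le_abs_sub (eval (fun i => x i) (homogeneousComponent d f))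
    (eval (fun i => x i) f)
  -- since `f x ≥ 0`, this holds whatever the sign of the leading form at `x`
  rw [abs_sub_comm, abs_of_nonneg hfx] at this
  nlinarith [min_le_left c₁ (m / R ^ d), pow_pos (by linarith : (0 : ℝ) < B) d]

theorem strongConvexOn_exp_norm_sq_mul_eval
    {X : Set (EuclideanSpace ℝ σ)} (hX : Convex ℝ X) {f : MvPolynomial σ ℝ} {d : ℕ}
    {m c C₁ C₂ N : ℝ} (hm : 0 < m) (hc : 0 < c) (hC₂ : 0 ≤ C₂)
    (hmf : ∀ z ∈ X, m ≤ eval (fun i => z i) f)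
    (hcf : ∀ z ∈ X, c * (1 + ‖z‖) ^ d ≤ eval (fun i => z i) f)
    (h₁ : ∀ z ∈ X, ∀ v : EuclideanSpace ℝ σ,
      |∑ i, v i * eval (fun i => z i) (pderiv i f)| ≤ C₁ * ‖v‖ * (1 + ‖z‖) ^ d)
    (h₂ : ∀ z ∈ X, ∀ v : EuclideanSpace ℝ σ,
      |∑ i, v i * ∑ j, v j * eval (fun i => z i) (pderiv j (pderiv i f))| ≤
        C₂ * ‖v‖ ^ 2 * (1 + ‖z‖) ^ d)
    (hN : 1 + C₂ / c + (C₁ / c) ^ 2 ≤ N) (ξ : EuclideanSpace ℝ σ) :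
    StrongConvexOn X m fun x => exp (N * ‖x - ξ‖ ^ 2) * eval (fun i => x i) f := by
  refine strongConvexOn_of_hasDerivAt_line hX fun x hx y hy => ?_
  set v := y - x
  have hline : ∀ t : ℝ, (fun i => (x + t • v) i) = (fun i => x i) + t • fun i => v i :=
    fun t => by ext i; simp
  set E : ℝ → ℝ := fun t => exp (N * ‖x + t • v - ξ‖ ^ 2)
  set u : ℝ → ℝ := fun t => N * (2 * inner ℝ (x + t • v - ξ) v)
  set q₀ : ℝ → ℝ := fun t => eval (fun i => (x + t • v) i) f
  set q₁ : ℝ → ℝ := fun t => ∑ i, v i * eval (fun i => (x + t • v) i) (pderiv i f)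
  set q₂ : ℝ → ℝ := fun t =>
    ∑ i, v i * ∑ j, v j * eval (fun i => (x + t • v) i) (pderiv j (pderiv i f))
  have hz : ∀ t, HasDerivAt (fun t : ℝ => x + t • v - ξ) v t := fun t =>
    (((hasDerivAt_id t).smul_const v).const_add x).sub_const ξ |>.congr_deriv (by simp)
  have hP : ∀ t, HasDerivAt (fun t => N * ‖x + t • v - ξ‖ ^ 2) (u t) t := fun t =>
    (hz t).norm_sq.const_mul N
  have hu : ∀ t, HasDerivAt u (N * (2 * ‖v‖ ^ 2)) t := fun t =>
    (((hz t).inner ℝ (hasDerivAt_const t v)).const_mul 2 |>.const_mul N).congr_deriv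
      (by simp)
  have hq₀ : ∀ t, HasDerivAt q₀ (q₁ t) t := fun t => by
    simpa only [q₀, q₁, hline] using hasDerivAt_eval_add_smul f _ _ t
  have hq₁ : ∀ t, HasDerivAt q₁ (q₂ t) t := fun t => by
    simp only [q₁, q₂, hline]
    exact HasDerivAt.fun_sum fun i _ => (hasDerivAt_eval_add_smul (pderiv i f) _ _ t).const_mul _
  refine ⟨fun t => E t * (u t * q₀ t + q₁ t),
    fun t => E t * (u t * (u t * q₀ t + q₁ t) + (N * (2 * ‖v‖ ^ 2) * q₀ t + u t * q₁ t + q₂ t)),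
    fun t => (hP t).exp_mul (hq₀ t),
    fun t => (hP t).exp_mul (((hu t).mul (hq₀ t)).add (hq₁ t)), fun t ht => ?_⟩
  have hzX : x + t • v ∈ X := hX.add_smul_sub_mem hx hy ⟨ht.1, ht.2⟩
  have hbound := mul_sq_le_of_growth_bounds hm hc hC₂ hN (hmf _ hzX) (by positivity) (hcf _ hzX)
    (h₁ _ hzX v) (h₂ _ hzX v) (u t)
  exact hbound.trans (le_mul_of_one_le_left ((by positivity : (0:ℝ) ≤ m * ‖v‖ ^ 2).trans hbound)
    (one_le_exp (mul_nonneg (le_trans (by positivity) hN) (sq_nonneg _))))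

end Euclidean

theorem stmt8_general {n : ℕ} (X : Set (EuclideanSpace ℝ (Fin n)))
    (hXcon : Convex ℝ X)
    (f : MvPolynomial (Fin n) ℝ) (d : ℕ) (hd : f.totalDegree = d) (hdpos : 0 < d)
    (hld : ∀ x : EuclideanSpace ℝ (Fin n), x ≠ 0 →
      MvPolynomial.eval (fun i => x i) (MvPolynomial.homogeneousComponent d f) ≠ 0)
    (m : ℝ) (hm : 0 < m)
    (hmf : ∀ x ∈ X, m ≤ MvPolynomial.eval (fun i => x i) f) :
    ∃ N₀ : ℕ, ∀ N : ℕ, N₀ ≤ N → ∀ ξ : EuclideanSpace ℝ (Fin n),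
      ∃ μ > 0, StrongConvexOn X μ
        (fun x => Real.exp ((N : ℝ) * ‖x - ξ‖ ^ 2) * MvPolynomial.eval (fun i => x i) f) := by
  obtain ⟨c, hc, hcf⟩ := exists_pos_mul_one_add_norm_pow_le_eval hd.le hdpos hld hm hmf
  obtain ⟨C₁, -, hC₁⟩ := exists_abs_sum_mul_eval_le (p := fun i => pderiv i f) (k := d)
    fun i => (totalDegree_pderiv_le f i).trans hd.le
  obtain ⟨C₂, hC₂, hC₂'⟩ := exists_abs_sum_mul_eval_le
    (p := fun ij : Fin n × Fin n => pderiv ij.2 (pderiv ij.1 f)) (k := d)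
    fun ij => ((totalDegree_pderiv_le _ _).trans (totalDegree_pderiv_le f _)).trans hd.le
  have hcoord (z : EuclideanSpace ℝ (Fin n)) (i : Fin n) : |z i| ≤ 1 + ‖z‖ :=
    (PiLp.norm_apply_le z i).trans (by linarith)
  refine ⟨⌈1 + C₂ / c + (C₁ / c) ^ 2⌉₊, fun N hN ξ => ⟨m, hm,
    strongConvexOn_exp_norm_sq_mul_eval hXcon hm hc hC₂ hmf hcf (fun z _ v => ?_)
      (fun z _ v => ?_) (Nat.ceil_le.1 hN) ξ⟩⟩
  · exact hC₁ (fun i => v i) ‖v‖ _ _ (by linarith [norm_nonneg z]) (hcoord z)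
      (PiLp.norm_apply_le v)
  · have hvv (ij : Fin n × Fin n) : |v ij.1 * v ij.2| ≤ ‖v‖ ^ 2 := by
      rw [abs_mul, sq]
      exact mul_le_mul (PiLp.norm_apply_le v _) (PiLp.norm_apply_le v _) (abs_nonneg _)
        (norm_nonneg _)
    simpa only [Fintype.sum_prod_type, Finset.mul_sum, mul_assoc] using
      hC₂' _ _ _ _ (by linarith [norm_nonneg z]) (hcoord z) hvv

/-- Let `X ⊆ ℝⁿ` be closed convex and `f` a polynomial of degree `d > 0`
whose leading form vanishes only at the origin, with `f ≥ m > 0` on `X`. Then there is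
`N₀ ∈ ℕ` such that for every integer `N ≥ N₀` and every `ξ ∈ ℝⁿ`, the function
`φ(x) = e^{N|x-ξ|²} f(x)` is strongly convex on `X`. -/
theorem stmt8 {n : ℕ} (X : Set (EuclideanSpace ℝ (Fin n)))
    (hXcl : IsClosed X) (hXcon : Convex ℝ X)
    (f : MvPolynomial (Fin n) ℝ) (d : ℕ) (hd : f.totalDegree = d) (hdpos : 0 < d)
    (hld : ∀ x : EuclideanSpace ℝ (Fin n), x ≠ 0 →
      MvPolynomial.eval (fun i => x i) (MvPolynomial.homogeneousComponent d f) ≠ 0)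
    (m : ℝ) (hm : 0 < m)
    (hmf : ∀ x ∈ X, m ≤ MvPolynomial.eval (fun i => x i) f) :
    ∃ N₀ : ℕ, ∀ N : ℕ, N₀ ≤ N → ∀ ξ : EuclideanSpace ℝ (Fin n),
      ∃ μ > 0, StrongConvexOn X μ
        (fun x => Real.exp ((N : ℝ) * ‖x - ξ‖ ^ 2) * MvPolynomial.eval (fun i => x i) f) :=
  stmt8_general X hXcon f d hd hdpos hld m hm hmf
end

section
/- Let f(x,y,z) = (y²+z²+1)[(x-1)²(x+1)² + (yz+1)² + y²]. Then f(x,y,z) ≥ 1/2 for all (x,y,z) ∈ ℝ³, yet for every N ∈ ℝ the function φ_N(x,y,z) = e^{N(x²+y²+z²)} f(x,y,z) is not convex on ℝ³. -/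
open Real Set

/-- `f(x,y,z) = (y²+z²+1)[(x-1)²(x+1)² + (yz+1)² + y²]`. -/
noncomputable def f9 (p : ℝ × ℝ × ℝ) : ℝ :=
  (p.2.1 ^ 2 + p.2.2 ^ 2 + 1) *
    ((p.1 - 1) ^ 2 * (p.1 + 1) ^ 2 + (p.2.1 * p.2.2 + 1) ^ 2 + p.2.1 ^ 2)

/-!
Completing the square in `y` gives
`(z² + 1) ((yz + 1)² + y²) = ((z² + 1) y + z)² + 1`, so in fact `f ≥ 1`.

On the hyperbola `yz = -1` the middle term of `f` vanishes, so `f(±1, y, z) = (y² + z² + 1) y²`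
while `f(0, y, z) = (y² + z² + 1) (1 + y²)`. Convexity of `φ_N` along the segment from
`(-1, y, z)` to `(1, y, z)` forces `φ_N(0, y, z) ≤ φ_N(1, y, z)`, i.e. `1 + y² ≤ e^N y²`,
which fails for `y = e^{-N/2}`, `z = -e^{N/2}`.
-/

lemma one_le_f9 (p : ℝ × ℝ × ℝ) : 1 ≤ f9 p := by
  obtain ⟨x, y, z⟩ := p
  calc (1 : ℝ) ≤ ((z ^ 2 + 1) * y + z) ^ 2 + 1 := le_add_of_nonneg_left (sq_nonneg _)
    _ = (z ^ 2 + 1) * ((y * z + 1) ^ 2 + y ^ 2) := by ring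
    _ ≤ f9 (x, y, z) := by
      unfold f9
      gcongr
      · nlinarith [sq_nonneg y]
      · nlinarith [sq_nonneg ((x - 1) * (x + 1))]

lemma f9_of_mul_eq_neg_one {x y z : ℝ} (h : y * z = -1) :
    f9 (x, y, z) = (y ^ 2 + z ^ 2 + 1) * ((x ^ 2 - 1) ^ 2 + y ^ 2) := by
  simp only [f9, h]
  ring

lemma not_convexOn_exp_mul_f9 (N : ℝ) :
    ¬ ConvexOn ℝ univ
      (fun p : ℝ × ℝ × ℝ => exp (N * (p.1 ^ 2 + p.2.1 ^ 2 + p.2.2 ^ 2)) * f9 p) := by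
  intro hconv
  set y := exp (-(N / 2))
  set z := -exp (N / 2)
  have hyz : y * z = -1 := by simp [y, z, ← exp_add]
  have hy : y ^ 2 * exp N = 1 := by simp [y, ← exp_nat_mul, ← exp_add]; ring_nf
  have hmid : (1 / 2 : ℝ) • ((1 : ℝ), y, z) + (1 / 2 : ℝ) • ((-1 : ℝ), y, z) = (0, y, z) := by
    ext <;> simp <;> ring
  have hjensen := hconv.2 (mem_univ (1, y, z)) (mem_univ (-1, y, z))
    (by norm_num : (0 : ℝ) ≤ 1 / 2) (by norm_num : (0 : ℝ) ≤ 1 / 2) (by norm_num)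
  simp only [hmid, f9_of_mul_eq_neg_one hyz, smul_eq_mul] at hjensen
  norm_num at hjensen
  have hexp : exp (N * (1 + y ^ 2 + z ^ 2)) = exp N * exp (N * (y ^ 2 + z ^ 2)) := by
    rw [← exp_add]; ring_nf
  rw [hexp] at hjensen
  set P := exp (N * (y ^ 2 + z ^ 2)) * (y ^ 2 + z ^ 2 + 1)
  have hle : P * (1 + y ^ 2) ≤ P * (y ^ 2 * exp N) := by linear_combination hjensen
  have hpos : 0 < P * y ^ 2 := by positivity
  rw [hy] at hle
  linarith

/-- `f ≥ 1/2` on `ℝ³`, yet for every `N ∈ ℝ` the function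
`φ_N(x,y,z) = e^{N(x²+y²+z²)} f(x,y,z)` is not convex on `ℝ³`. -/
theorem stmt9 :
    (∀ p : ℝ × ℝ × ℝ, (1 : ℝ) / 2 ≤ f9 p) ∧
    ∀ N : ℝ, ¬ ConvexOn ℝ Set.univ
      (fun p : ℝ × ℝ × ℝ =>
        Real.exp (N * (p.1 ^ 2 + p.2.1 ^ 2 + p.2.2 ^ 2)) * f9 p) := by
  exact ⟨fun p => le_trans (by norm_num) (one_le_f9 p), not_convexOn_exp_mul_f9⟩
end

section
/- With f as in the previous example, for ξ > 0 one has φ_N(0, ξ⁻¹, -ξ) = e^{N(ξ⁻²+ξ²)}(ξ⁻²+ξ²+1)(1+ξ⁻²) and φ_N(±1, ξ⁻¹, -ξ) = e^{N(ξ⁻²+ξ²)}(ξ⁻²+ξ²+1) e^N ξ⁻², so that for ξ sufficiently large, φ_N(1, ξ⁻¹, -ξ) = φ_N(-1, ξ⁻¹, -ξ) < φ_N(0, ξ⁻¹, -ξ). -/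
open Real Set

/-- `φ_N(x,y,z) = e^{N(x²+y²+z²)} f(x,y,z)`. -/
noncomputable def phi9 (N : ℝ) (p : ℝ × ℝ × ℝ) : ℝ :=
  Real.exp (N * (p.1 ^ 2 + p.2.1 ^ 2 + p.2.2 ^ 2)) * f9 p

/- On the hyperbola `yz = -1` the term `(yz+1)²` vanishes, so `φ_N(x, ξ⁻¹, -ξ)` splits into a
factor independent of `x` and the factor `e^{Nx²}((x-1)²(x+1)² + ξ⁻²)`. -/
lemma phi9_inv_neg (N x ξ : ℝ) (hξ : ξ ≠ 0) :
    phi9 N (x, ξ⁻¹, -ξ) =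
      Real.exp (N * (ξ⁻¹ ^ 2 + ξ ^ 2)) * (ξ⁻¹ ^ 2 + ξ ^ 2 + 1) *
        (Real.exp (N * x ^ 2) * ((x - 1) ^ 2 * (x + 1) ^ 2 + ξ⁻¹ ^ 2)) := by
  have hyz : ξ⁻¹ * -ξ + 1 = 0 := by field_simp; ring
  have hexp : N * (x ^ 2 + ξ⁻¹ ^ 2 + (-ξ) ^ 2) = N * (ξ⁻¹ ^ 2 + ξ ^ 2) + N * x ^ 2 := by ring
  simp only [phi9, f9, hyz, hexp, Real.exp_add]
  ring

lemma phi9_zero_inv_neg (N ξ : ℝ) (hξ : ξ ≠ 0) :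
    phi9 N (0, ξ⁻¹, -ξ) =
      Real.exp (N * (ξ⁻¹ ^ 2 + ξ ^ 2)) * (ξ⁻¹ ^ 2 + ξ ^ 2 + 1) * (1 + ξ⁻¹ ^ 2) := by
  rw [phi9_inv_neg N 0 ξ hξ]
  norm_num

lemma phi9_one_inv_neg (N ξ : ℝ) (hξ : ξ ≠ 0) :
    phi9 N (1, ξ⁻¹, -ξ) =
      Real.exp (N * (ξ⁻¹ ^ 2 + ξ ^ 2)) * (ξ⁻¹ ^ 2 + ξ ^ 2 + 1) * Real.exp N * ξ⁻¹ ^ 2 := by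
  rw [phi9_inv_neg N 1 ξ hξ]
  norm_num
  ring

lemma phi9_neg_one_inv_neg (N ξ : ℝ) (hξ : ξ ≠ 0) :
    phi9 N (-1, ξ⁻¹, -ξ) =
      Real.exp (N * (ξ⁻¹ ^ 2 + ξ ^ 2)) * (ξ⁻¹ ^ 2 + ξ ^ 2 + 1) * Real.exp N * ξ⁻¹ ^ 2 := by
  rw [phi9_inv_neg N (-1) ξ hξ]
  norm_num
  ring

lemma mul_inv_sq_lt_one_add_inv_sq {c ξ : ℝ} (hξ : ξ ≠ 0) (h : c < ξ ^ 2) :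
    c * ξ⁻¹ ^ 2 < 1 + ξ⁻¹ ^ 2 :=
  calc c * ξ⁻¹ ^ 2 < ξ ^ 2 * ξ⁻¹ ^ 2 := by gcongr
    _ = 1 := by field_simp
    _ ≤ 1 + ξ⁻¹ ^ 2 := by simp [sq_nonneg]

/-- For `ξ > 0`, `φ_N(0,ξ⁻¹,-ξ) = e^{N(ξ⁻²+ξ²)}(ξ⁻²+ξ²+1)(1+ξ⁻²)` and
`φ_N(±1,ξ⁻¹,-ξ) = e^{N(ξ⁻²+ξ²)}(ξ⁻²+ξ²+1) e^N ξ⁻²`; for `ξ` sufficiently large,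
`φ_N(1,ξ⁻¹,-ξ) = φ_N(-1,ξ⁻¹,-ξ) < φ_N(0,ξ⁻¹,-ξ)`. -/
theorem stmt10 (N : ℝ) :
    (∀ ξ : ℝ, 0 < ξ →
      phi9 N (0, ξ⁻¹, -ξ) =
        Real.exp (N * (ξ⁻¹ ^ 2 + ξ ^ 2)) * (ξ⁻¹ ^ 2 + ξ ^ 2 + 1) * (1 + ξ⁻¹ ^ 2) ∧
      phi9 N (1, ξ⁻¹, -ξ) =
        Real.exp (N * (ξ⁻¹ ^ 2 + ξ ^ 2)) * (ξ⁻¹ ^ 2 + ξ ^ 2 + 1) * Real.exp N * ξ⁻¹ ^ 2 ∧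
      phi9 N (-1, ξ⁻¹, -ξ) =
        Real.exp (N * (ξ⁻¹ ^ 2 + ξ ^ 2)) * (ξ⁻¹ ^ 2 + ξ ^ 2 + 1) * Real.exp N * ξ⁻¹ ^ 2) ∧
    ∃ Ξ : ℝ, ∀ ξ : ℝ, Ξ ≤ ξ →
      phi9 N (1, ξ⁻¹, -ξ) = phi9 N (-1, ξ⁻¹, -ξ) ∧
      phi9 N (1, ξ⁻¹, -ξ) < phi9 N (0, ξ⁻¹, -ξ) := by
  refine ⟨fun ξ hξ => ⟨phi9_zero_inv_neg N ξ hξ.ne', phi9_one_inv_neg N ξ hξ.ne',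
    phi9_neg_one_inv_neg N ξ hξ.ne'⟩, Real.exp N + 1, fun ξ hΞ => ?_⟩
  have hexpN : 0 < Real.exp N := Real.exp_pos N
  have hξ : ξ ≠ 0 := (by linarith : 0 < ξ).ne'
  have hlarge : Real.exp N < ξ ^ 2 := by nlinarith
  rw [phi9_one_inv_neg N ξ hξ, phi9_neg_one_inv_neg N ξ hξ, phi9_zero_inv_neg N ξ hξ,
    mul_assoc _ (Real.exp N)]
  exact ⟨rfl, mul_lt_mul_of_pos_left (mul_inv_sq_lt_one_add_inv_sq hξ hlarge) (by positivity)⟩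
end

section
/- Let 2 ≤ k, and f_k(x,y,z) = (y²+z²+1)^k[(x-1)²(x+1)² + (yz+1)² + y²]. Then f_k(x,y,z) → ∞ as |(x,y,z)| → ∞, f_k > 0 on ℝ³, and for every N ∈ ℝ the function e^{N(x²+y²+z²)} f_k(x,y,z) is not convex on ℝ³. -/
open Real Set Filter

/-! On the hyperbola `yz = -1` one has `(yz+1)² + y² = y² = 1/z²`, which the weight
`(y²+z²+1)^k ≥ z⁴` more than compensates when `k ≥ 2`; this gives `f_k ≥ |p|²/4 - 1`.
On the other hand, along each line `y = t, z = -1/t` of that hyperbola, `f_k` is a positive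
multiple of the double well `(x²-1)² + t²`, of height `1 + t²` at `x = 0` and `t²` at `x = ±1`.
The factor `e^{N x²}` raises the wells only by `e^N`, so for `t = e^{-N/2}` midpoint convexity
between `x = -1` and `x = 1` fails. -/

/-- `f_k(x,y,z) = (y²+z²+1)^k[(x-1)²(x+1)² + (yz+1)² + y²]`. -/
noncomputable def fk (k : ℕ) (p : ℝ × ℝ × ℝ) : ℝ :=
  (p.2.1 ^ 2 + p.2.2 ^ 2 + 1) ^ k *
    ((p.1 - 1) ^ 2 * (p.1 + 1) ^ 2 + (p.2.1 * p.2.2 + 1) ^ 2 + p.2.1 ^ 2)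

lemma fk_pos (k : ℕ) (p : ℝ × ℝ × ℝ) : 0 < fk k p := by
  obtain ⟨x, y, z⟩ := p
  have hquartic : 0 < (x - 1) ^ 2 * (x + 1) ^ 2 + (y * z + 1) ^ 2 + y ^ 2 := by
    rcases eq_or_ne y 0 with rfl | hy
    · simp only [zero_mul, zero_add]
      positivity
    · positivity
  exact mul_pos (by positivity) hquartic

lemma sq_mul_le_fk {k : ℕ} (hk : 2 ≤ k) (x y z : ℝ) :
    (y ^ 2 + z ^ 2 + 1) ^ 2 * ((x - 1) ^ 2 * (x + 1) ^ 2 + (y * z + 1) ^ 2 + y ^ 2) ≤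
      fk k (x, y, z) :=
  mul_le_mul_of_nonneg_right (pow_le_pow_right₀ (by nlinarith) hk) (by positivity)

lemma sq_div_two_le_sq_mul (y z : ℝ) :
    z ^ 2 / 2 ≤ (y ^ 2 + z ^ 2 + 1) ^ 2 * ((y * z + 1) ^ 2 + y ^ 2) := by
  have hw : 1 / 2 ≤ (y * z + 1) ^ 2 + (y * z) ^ 2 := by nlinarith [sq_nonneg (y * z + 1 / 2)]
  have hweight : z ^ 2 * (1 + z ^ 2) ≤ (y ^ 2 + z ^ 2 + 1) ^ 2 := by nlinarith [sq_nonneg y]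
  calc z ^ 2 / 2 ≤ z ^ 2 * ((y * z + 1) ^ 2 + (y * z) ^ 2) := by nlinarith [sq_nonneg z]
    _ ≤ z ^ 2 * (1 + z ^ 2) * ((y * z + 1) ^ 2 + y ^ 2) := by
      nlinarith [sq_nonneg (z * (y * z + 1)), sq_nonneg (z ^ 2 * (y * z + 1))]
    _ ≤ (y ^ 2 + z ^ 2 + 1) ^ 2 * ((y * z + 1) ^ 2 + y ^ 2) := by gcongr

lemma sq_sum_div_four_sub_one_le_fk {k : ℕ} (hk : 2 ≤ k) (x y z : ℝ) :
    (x ^ 2 + y ^ 2 + z ^ 2) / 4 - 1 ≤ fk k (x, y, z) := by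
  have hquartic : x ^ 2 - 5 / 4 + y ^ 2 ≤ (x - 1) ^ 2 * (x + 1) ^ 2 + (y * z + 1) ^ 2 + y ^ 2 := by
    nlinarith [sq_nonneg (x ^ 2 - 3 / 2), sq_nonneg (y * z + 1)]
  have hx_y : x ^ 2 - 5 / 4 + y ^ 2 ≤ fk k (x, y, z) :=
    hquartic.trans <| (le_mul_of_one_le_left (by positivity) (one_le_pow₀ (by nlinarith))).trans
      (sq_mul_le_fk hk x y z)
  have hz : z ^ 2 / 2 ≤ fk k (x, y, z) := by
    refine (sq_div_two_le_sq_mul y z).trans ((mul_le_mul_of_nonneg_left ?_ (by positivity)).trans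
      (sq_mul_le_fk hk x y z))
    nlinarith [mul_nonneg (sq_nonneg (x - 1)) (sq_nonneg (x + 1))]
  linarith [sq_nonneg x, sq_nonneg y]

lemma tendsto_sq_sum_cocompact :
    Tendsto (fun p : ℝ × ℝ × ℝ => p.1 ^ 2 + p.2.1 ^ 2 + p.2.2 ^ 2) (cocompact _) atTop := by
  refine tendsto_atTop_mono (fun p => ?_)
    ((tendsto_pow_atTop two_ne_zero).comp tendsto_norm_cocompact_atTop)
  obtain ⟨x, y, z⟩ := p
  have hsqrt : ‖(x, y, z)‖ ≤ √(x ^ 2 + y ^ 2 + z ^ 2) := by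
    simp only [Prod.norm_def, Real.norm_eq_abs]
    exact max_le (abs_le_sqrt (by nlinarith))
      (max_le (abs_le_sqrt (by nlinarith)) (abs_le_sqrt (by nlinarith)))
  exact (le_sqrt (norm_nonneg _) (by positivity)).1 hsqrt

lemma tendsto_fk_cocompact {k : ℕ} (hk : 2 ≤ k) : Tendsto (fk k) (cocompact _) atTop :=
  tendsto_atTop_mono (fun ⟨x, y, z⟩ => sq_sum_div_four_sub_one_le_fk hk x y z)
    (tendsto_atTop_add_const_right _ (-1) (tendsto_sq_sum_cocompact.atTop_div_const four_pos))
lemma exp_mul_fk_hyperbola (k : ℕ) (N x : ℝ) {t : ℝ} (ht : t ≠ 0) :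
    exp (N * (x ^ 2 + t ^ 2 + (-t⁻¹) ^ 2)) * fk k (x, t, -t⁻¹) =
      exp (N * (t ^ 2 + t⁻¹ ^ 2)) * (t ^ 2 + t⁻¹ ^ 2 + 1) ^ k *
        (exp (N * x ^ 2) * ((x - 1) ^ 2 * (x + 1) ^ 2 + t ^ 2)) := by
  have hyz : t * -t⁻¹ + 1 = 0 := by field_simp; ring
  simp only [fk, hyz, neg_sq]
  rw [show N * (x ^ 2 + t ^ 2 + t⁻¹ ^ 2) = N * (t ^ 2 + t⁻¹ ^ 2) + N * x ^ 2 by ring, exp_add]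
  ring

lemma not_convexOn_exp_mul_fk (k : ℕ) (N : ℝ) :
    ¬ ConvexOn ℝ univ
      (fun p : ℝ × ℝ × ℝ => exp (N * (p.1 ^ 2 + p.2.1 ^ 2 + p.2.2 ^ 2)) * fk k p) := by
  intro hconv
  set t := exp (-(N / 2))
  have ht : t ≠ 0 := (exp_pos _).ne'
  have hmid : (1 / 2 : ℝ) • ((-1 : ℝ), t, -t⁻¹) + (1 / 2 : ℝ) • ((1 : ℝ), t, -t⁻¹) =
      ((0 : ℝ), t, -t⁻¹) := by
    simp only [Prod.smul_mk, Prod.mk_add_mk, smul_eq_mul, Prod.mk.injEq]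
    exact ⟨by ring, by ring, by ring⟩
  have key := hconv.2 (mem_univ ((-1 : ℝ), t, -t⁻¹)) (mem_univ ((1 : ℝ), t, -t⁻¹))
    (by norm_num : (0 : ℝ) ≤ 1 / 2) (by norm_num : (0 : ℝ) ≤ 1 / 2) (by norm_num)
  simp only [hmid, smul_eq_mul, exp_mul_fk_hyperbola k N _ ht] at key
  have hEt : exp N * t ^ 2 = 1 := by
    rw [sq, ← exp_add, ← exp_add, exp_eq_one_iff]
    ring
  generalize hC : exp (N * (t ^ 2 + t⁻¹ ^ 2)) * (t ^ 2 + t⁻¹ ^ 2 + 1) ^ k = C at key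
  have hCpos : 0 < C := hC ▸ by positivity
  norm_num [hEt] at key
  nlinarith [mul_pos hCpos (pow_pos (exp_pos (-(N / 2))) 2)]

/-- For `k ≥ 2`, `f_k → ∞` at infinity, `f_k > 0` on `ℝ³`, yet for
every `N ∈ ℝ` the function `e^{N(x²+y²+z²)} f_k(x,y,z)` is not convex on `ℝ³`. -/
theorem stmt11 (k : ℕ) (hk : 2 ≤ k) :
    Filter.Tendsto (fk k) (Filter.cocompact (ℝ × ℝ × ℝ)) Filter.atTop ∧
    (∀ p : ℝ × ℝ × ℝ, 0 < fk k p) ∧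
    ∀ N : ℝ, ¬ ConvexOn ℝ Set.univ
      (fun p : ℝ × ℝ × ℝ =>
        Real.exp (N * (p.1 ^ 2 + p.2.1 ^ 2 + p.2.2 ^ 2)) * fk k p) :=
  ⟨tendsto_fk_cocompact hk, fk_pos k, not_convexOn_exp_mul_fk k⟩
end

section
/- Let X ⊆ ℝⁿ be a closed convex set and f a polynomial with f ≥ m > 0 on X. Then there exists N₀ ∈ ℝ such that for all N ≥ N₀ the function Φ_N(x) = e^{N e^{|x|²}} f(x) is strongly convex on X. -/
open Real Set MvPolynomial

/-!
Strong convexity with modulus `m` is convexity of `Φ_N - m/2 ‖·‖²`, which may be checked on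
segments `γ t = x + t v`. With `u = N e^{‖γ‖²}` and `Q = 2⟪γ, v⟫`, the second derivative of
`Φ_N ∘ γ` is `e^u ((uQ)² f + 2uQ ∂ᵥf + u(Q² + 2‖v‖²) f + ∂ᵥ²f)`. Completing the square in `uQ`
(using `f ≥ m`) leaves the term `2u‖v‖²m` to dominate `(∂ᵥf)²/m` and `∂ᵥ²f`. Every polynomial
is `O(e^{ε‖w‖²})` for each `ε > 0`, so these are at most `‖v‖² C e^{‖γ‖²}`, and `u = N e^{‖γ‖²}`
wins once `N` is large.
-/

theorem MvPolynomial.hasDerivAt_eval_add_smul_s13 {σ : Type*} [Fintype σ] (g : MvPolynomial σ ℝ)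
    (x v : σ → ℝ) (t : ℝ) :
    HasDerivAt (fun s : ℝ => eval (x + s • v) g)
      (∑ i, v i * eval (x + t • v) (pderiv i g)) t := by
  induction g using MvPolynomial.induction_on with
  | C a => simpa using hasDerivAt_const t a
  | add p q hp hq =>
    simpa [mul_add, Finset.sum_add_distrib] using hp.fun_add hq
  | mul_X p j hp =>
    have hj : HasDerivAt (fun s : ℝ => x j + s * v j) (v j) t := by
      simpa using ((hasDerivAt_id t).mul_const (v j)).const_add (x j)
    have hfun : (fun s : ℝ => eval (x + s • v) (p * X j)) =
        fun s => eval (x + s • v) p * (x j + s * v j) := by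
      ext s; simp
    have hsum : ∑ i, v i * eval (x + t • v) (pderiv i (p * X j)) =
        (∑ i, v i * eval (x + t • v) (pderiv i p)) * (x j + t * v j) +
          eval (x + t • v) p * v j := by
      classical
      simp only [Derivation.leibniz, pderiv_X, smul_eq_mul, map_add, map_mul, eval_X, mul_add,
        Finset.sum_add_distrib, Pi.add_apply, Pi.smul_apply, Pi.single_apply,
        apply_ite (eval _), map_zero, mul_ite, mul_one, mul_zero, Finset.sum_ite_eq,
        Finset.mem_univ, if_true, Finset.sum_mul]
      rw [add_comm]
      congr 1
      · rw [← Finset.sum_add_distrib]; exact Finset.sum_congr rfl fun i _ => by ring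
      · ring
    rw [hfun]
    exact (hp.fun_mul hj).congr_deriv hsum.symm

theorem Real.le_exp_mul_exp_mul_sq {ε : ℝ} (hε : 0 < ε) (s : ℝ) :
    s ≤ exp (1 / (4 * ε)) * exp (ε * s ^ 2) := by
  have hsq : 1 / (4 * ε) + ε * s ^ 2 - s = (2 * ε * s - 1) ^ 2 / (4 * ε) := by
    field_simp; ring
  have : 0 ≤ 1 / (4 * ε) + ε * s ^ 2 - s := by rw [hsq]; positivity
  rw [← exp_add]
  linarith [add_one_le_exp (1 / (4 * ε) + ε * s ^ 2)]

theorem MvPolynomial.exists_abs_eval_le_mul_exp {σ : Type*} [Fintype σ] (g : MvPolynomial σ ℝ)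
    {ε : ℝ} (hε : 0 < ε) :
    ∃ C, ∀ w : EuclideanSpace ℝ σ, |eval w.ofLp g| ≤ C * exp (ε * ‖w‖ ^ 2) := by
  induction g using MvPolynomial.induction_on generalizing ε with
  | C a =>
    refine ⟨|a|, fun w => ?_⟩
    simpa using le_mul_of_one_le_right (abs_nonneg a) (one_le_exp (by positivity))
  | add p q hp hq =>
    obtain ⟨Cp, hCp⟩ := hp hε
    obtain ⟨Cq, hCq⟩ := hq hε
    refine ⟨Cp + Cq, fun w => ?_⟩
    rw [map_add, add_mul]
    exact (abs_add_le _ _).trans (add_le_add (hCp w) (hCq w))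
  | mul_X p j hp =>
    obtain ⟨Cp, hCp⟩ := hp (half_pos hε)
    refine ⟨Cp * exp (1 / (4 * (ε / 2))), fun w => ?_⟩
    have hj : |w.ofLp j| ≤ exp (1 / (4 * (ε / 2))) * exp (ε / 2 * ‖w‖ ^ 2) :=
      (PiLp.norm_apply_le w j).trans (le_exp_mul_exp_mul_sq (half_pos hε) ‖w‖)
    calc |eval w.ofLp (p * X j)| = |eval w.ofLp p| * |w.ofLp j| := by simp [abs_mul]
      _ ≤ Cp * exp (ε / 2 * ‖w‖ ^ 2) * (exp (1 / (4 * (ε / 2))) * exp (ε / 2 * ‖w‖ ^ 2)) :=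
        mul_le_mul (hCp w) hj (abs_nonneg _) ((abs_nonneg _).trans (hCp w))
      _ = Cp * exp (1 / (4 * (ε / 2))) * exp (ε * ‖w‖ ^ 2) := by
        rw [mul_mul_mul_comm, ← exp_add, ← add_mul, add_halves]

theorem MvPolynomial.exists_sum_abs_eval_le_mul_exp {σ ι : Type*} [Fintype σ] [Fintype ι]
    (g : ι → MvPolynomial σ ℝ) {ε : ℝ} (hε : 0 < ε) :
    ∃ C, ∀ w : EuclideanSpace ℝ σ, ∑ k, |eval w.ofLp (g k)| ≤ C * exp (ε * ‖w‖ ^ 2) := by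
  choose C hC using fun k => (g k).exists_abs_eval_le_mul_exp hε
  exact ⟨∑ k, C k, fun w => by rw [Finset.sum_mul]; exact Finset.sum_le_sum fun k _ => hC k w⟩

theorem EuclideanSpace.abs_sum_mul_le {σ : Type*} [Fintype σ] (v : EuclideanSpace ℝ σ)
    (a : σ → ℝ) : |∑ i, v i * a i| ≤ ‖v‖ * ∑ i, |a i| := by
  rw [Finset.mul_sum]
  refine (Finset.abs_sum_le_sum_abs _ _).trans (Finset.sum_le_sum fun i _ => ?_)
  rw [abs_mul]
  exact mul_le_mul_of_nonneg_right (PiLp.norm_apply_le v i) (abs_nonneg _)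

theorem HasDerivAt.exp_mul_s13 {u p : ℝ → ℝ} {u' p' t : ℝ} (hu : HasDerivAt u u' t)
    (hp : HasDerivAt p p' t) :
    HasDerivAt (fun s => Real.exp (u s) * p s) (Real.exp (u t) * (u' * p t + p')) t :=
  (hu.exp.fun_mul hp).congr_deriv (by ring)

theorem secondDeriv_lower_bound {m S1 S2 N e nv p p1 p2 Q : ℝ} (hm : 0 < m) (hS2 : 0 ≤ S2)
    (hnv : 0 ≤ nv) (he : 1 ≤ e) (hN : S1 ^ 2 + m * S2 + m ^ 2 ≤ 2 * N * m ^ 2) (hp : m ≤ p)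
    (hp1 : p1 ^ 2 ≤ nv * S1 ^ 2 * e) (hp2 : |p2| ≤ nv * S2 * e) :
    m * nv ≤ exp (N * e) * ((N * e * Q) ^ 2 * p + 2 * (N * e * Q) * p1 +
      N * e * (Q ^ 2 + 2 * nv) * p + p2) := by
  have hN0 : 0 ≤ N := by nlinarith [sq_nonneg S1, mul_nonneg hm.le hS2]
  have hu : 0 ≤ N * e := mul_nonneg hN0 (zero_le_one.trans he)
  set B := (N * e * Q) ^ 2 * p + 2 * (N * e * Q) * p1 + N * e * (Q ^ 2 + 2 * nv) * p + p2
  have hsq : 0 ≤ m * ((N * e * Q) ^ 2 * p + 2 * (N * e * Q) * p1) + p1 ^ 2 := by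
    linarith [sq_nonneg (m * (N * e * Q) + p1),
      mul_nonneg hm.le (mul_nonneg (sq_nonneg (N * e * Q)) (sub_nonneg.2 hp))]
  have hp2' : 0 ≤ p2 + nv * S2 * e := by linarith [neg_le_of_abs_le hp2]
  have hB : m * nv ≤ B := by
    refine le_of_mul_le_mul_left ?_ hm
    linarith [mul_nonneg (mul_nonneg hm.le hu) (mul_nonneg (sq_nonneg Q) (hm.le.trans hp)),
      mul_nonneg (mul_nonneg (mul_nonneg hm.le hu) hnv) (sub_nonneg.2 hp),
      mul_nonneg hm.le hp2',
      mul_nonneg (mul_nonneg hnv (zero_le_one.trans he)) (sub_nonneg.2 hN),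
      mul_nonneg (mul_nonneg hnv (sq_nonneg m)) (sub_nonneg.2 he)]
  exact hB.trans (le_mul_of_one_le_left ((mul_nonneg hm.le hnv).trans hB) (one_le_exp hu))

section
variable {σ : Type*} [Fintype σ] {f : MvPolynomial σ ℝ}

theorem MvPolynomial.sq_sum_mul_eval_pderiv_le {S : ℝ}
    (hS : ∀ w : EuclideanSpace ℝ σ, ∑ i, |eval w.ofLp (pderiv i f)| ≤ S * exp (1 / 2 * ‖w‖ ^ 2))
    (v w : EuclideanSpace ℝ σ) :
    (∑ i, v i * eval w.ofLp (pderiv i f)) ^ 2 ≤ ‖v‖ ^ 2 * S ^ 2 * exp (‖w‖ ^ 2) := by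
  have h := (EuclideanSpace.abs_sum_mul_le v _).trans
    (mul_le_mul_of_nonneg_left (hS w) (norm_nonneg v))
  calc (∑ i, v i * eval w.ofLp (pderiv i f)) ^ 2
      = |∑ i, v i * eval w.ofLp (pderiv i f)| ^ 2 := (sq_abs _).symm
    _ ≤ (‖v‖ * (S * exp (1 / 2 * ‖w‖ ^ 2))) ^ 2 := pow_le_pow_left₀ (abs_nonneg _) h 2
    _ = ‖v‖ ^ 2 * S ^ 2 * exp (‖w‖ ^ 2) := by
      rw [mul_pow, mul_pow, ← exp_nat_mul]; ring_nf

theorem MvPolynomial.abs_sum_mul_sum_mul_eval_pderiv_le {S : ℝ}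
    (hS : ∀ w : EuclideanSpace ℝ σ,
      ∑ ij : σ × σ, |eval w.ofLp (pderiv ij.2 (pderiv ij.1 f))| ≤ S * exp (‖w‖ ^ 2))
    (v w : EuclideanSpace ℝ σ) :
    |∑ i, v i * ∑ j, v j * eval w.ofLp (pderiv j (pderiv i f))| ≤
      ‖v‖ ^ 2 * S * exp (‖w‖ ^ 2) := by
  calc |∑ i, v i * ∑ j, v j * eval w.ofLp (pderiv j (pderiv i f))|
      ≤ ‖v‖ * ∑ i, |∑ j, v j * eval w.ofLp (pderiv j (pderiv i f))| :=
        EuclideanSpace.abs_sum_mul_le v _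
    _ ≤ ‖v‖ * ∑ i, ‖v‖ * ∑ j, |eval w.ofLp (pderiv j (pderiv i f))| := by
        gcongr with i; exact EuclideanSpace.abs_sum_mul_le v _
    _ = ‖v‖ ^ 2 * ∑ ij : σ × σ, |eval w.ofLp (pderiv ij.2 (pderiv ij.1 f))| := by
        rw [← Finset.mul_sum,
          Fintype.sum_prod_type' fun i j => |eval w.ofLp (pderiv j (pderiv i f))|]
        ring
    _ ≤ ‖v‖ ^ 2 * S * exp (‖w‖ ^ 2) := by
        rw [mul_assoc]; exact mul_le_mul_of_nonneg_left (hS w) (sq_nonneg _)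

end

theorem convexOn_of_convexOn_Icc_add_smul_sub {E : Type*} [AddCommGroup E] [Module ℝ E]
    {s : Set E} {g : E → ℝ} (hs : Convex ℝ s)
    (h : ∀ x ∈ s, ∀ y ∈ s, ConvexOn ℝ (Icc 0 1) fun t : ℝ => g (x + t • (y - x))) :
    ConvexOn ℝ s g := by
  refine ⟨hs, fun x hx y hy a b ha hb hab => ?_⟩
  have h01 := (h x hx y hy).2 (left_mem_Icc.2 zero_le_one) (right_mem_Icc.2 zero_le_one) ha hb hab
  obtain rfl : a = 1 - b := by linarith
  have hxy : x + b • (y - x) = (1 - b) • x + b • y := by module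
  simpa [hxy] using h01

theorem convexOn_Icc_exp_mul_eval_sub_sq {σ : Type*} [Fintype σ] {f : MvPolynomial σ ℝ}
    {m S1 S2 N : ℝ} (hm : 0 < m)
    (hS1 : ∀ w : EuclideanSpace ℝ σ, ∑ i, |eval w.ofLp (pderiv i f)| ≤ S1 * exp (1 / 2 * ‖w‖ ^ 2))
    (hS2 : ∀ w : EuclideanSpace ℝ σ,
      ∑ ij : σ × σ, |eval w.ofLp (pderiv ij.2 (pderiv ij.1 f))| ≤ S2 * exp (‖w‖ ^ 2))
    (hN : S1 ^ 2 + m * S2 + m ^ 2 ≤ 2 * N * m ^ 2) {x v : EuclideanSpace ℝ σ}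
    (hf : ∀ t ∈ Icc (0 : ℝ) 1, m ≤ eval (x + t • v).ofLp f) :
    ConvexOn ℝ (Icc 0 1) fun t : ℝ =>
      exp (N * exp (‖x + t • v‖ ^ 2)) * eval (x + t • v).ofLp f - m / 2 * ‖x + t • v‖ ^ 2 := by
  have hS2₀ : 0 ≤ S2 := by
    simpa using (Finset.sum_nonneg fun _ _ => abs_nonneg _).trans (hS2 0)
  have hline : ∀ t, HasDerivAt (fun s : ℝ => x + s • v) v t := fun t => by
    simpa using ((hasDerivAt_id t).smul_const v).const_add x
  have hq : ∀ t, HasDerivAt (fun s : ℝ => ‖x + s • v‖ ^ 2) (2 * inner ℝ (x + t • v) v) t :=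
    fun t => (hline t).norm_sq
  have hq' : ∀ t, HasDerivAt (fun s : ℝ => 2 * inner ℝ (x + s • v) v) (2 * ‖v‖ ^ 2) t :=
    fun t => by simpa using ((hline t).inner ℝ (hasDerivAt_const t v)).const_mul 2
  have hu : ∀ t, HasDerivAt (fun s : ℝ => N * exp (‖x + s • v‖ ^ 2))
      (N * exp (‖x + t • v‖ ^ 2) * (2 * inner ℝ (x + t • v) v)) t :=
    fun t => ((hq t).exp.const_mul N).congr_deriv (mul_assoc _ _ _).symm
  have hp : ∀ (g : MvPolynomial σ ℝ) t, HasDerivAt (fun s : ℝ => eval (x + s • v).ofLp g)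
      (∑ i, v i * eval (x + t • v).ofLp (pderiv i g)) t := fun g t => by
    simpa using g.hasDerivAt_eval_add_smul_s13 x.ofLp v.ofLp t
  have hp' : ∀ t, HasDerivAt (fun s : ℝ => ∑ i, v i * eval (x + s • v).ofLp (pderiv i f))
      (∑ i, v i * ∑ j, v j * eval (x + t • v).ofLp (pderiv j (pderiv i f))) t :=
    fun t => HasDerivAt.fun_sum fun i _ => (hp (pderiv i f) t).const_mul (v i)
  have hψ := fun t => ((hu t).exp_mul_s13 (hp f t)).sub ((hq t).const_mul (m / 2))
  have hψ' := fun t =>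
    ((hu t).exp_mul_s13 ((((hu t).fun_mul (hq' t)).fun_mul (hp f t)).fun_add (hp' t))).sub
      ((hq' t).const_mul (m / 2))
  refine convexOn_of_hasDerivWithinAt2_nonneg (convex_Icc 0 1)
    (fun t _ => (hψ t).continuousAt.continuousWithinAt) (fun t _ => (hψ t).hasDerivWithinAt)
    (fun t _ => (hψ' t).hasDerivWithinAt) fun t ht => ?_
  rw [interior_Icc] at ht
  have key := secondDeriv_lower_bound (Q := 2 * inner ℝ (x + t • v) v) hm hS2₀ (sq_nonneg ‖v‖)
    (one_le_exp (sq_nonneg ‖x + t • v‖)) hN (hf t (Ioo_subset_Icc_self ht))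
    (sq_sum_mul_eval_pderiv_le hS1 v _) (abs_sum_mul_sum_mul_eval_pderiv_le hS2 v _)
  linarith

theorem stmt13_general {n : ℕ} (X : Set (EuclideanSpace ℝ (Fin n)))
    (hXcon : Convex ℝ X)
    (f : MvPolynomial (Fin n) ℝ) (m : ℝ) (hm : 0 < m)
    (hmf : ∀ x ∈ X, m ≤ MvPolynomial.eval (fun i => x i) f) :
    ∃ N₀ : ℝ, ∀ N : ℝ, N₀ ≤ N →
      ∃ μ > 0, StrongConvexOn X μ
        (fun x => Real.exp (N * Real.exp (‖x‖ ^ 2)) * MvPolynomial.eval (fun i => x i) f) := by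
  obtain ⟨S1, hS1⟩ := exists_sum_abs_eval_le_mul_exp (fun i => pderiv i f) one_half_pos
  obtain ⟨S2, hS2⟩ := exists_sum_abs_eval_le_mul_exp
    (fun ij : Fin n × Fin n => pderiv ij.2 (pderiv ij.1 f)) one_pos
  refine ⟨(S1 ^ 2 + m * S2 + m ^ 2) / (2 * m ^ 2), fun N hN => ⟨m, hm, ?_⟩⟩
  have hN' : S1 ^ 2 + m * S2 + m ^ 2 ≤ 2 * N * m ^ 2 := by
    rw [div_le_iff₀ (by positivity)] at hN; linarith
  rw [strongConvexOn_iff_convex]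
  refine convexOn_of_convexOn_Icc_add_smul_sub hXcon fun x hx y hy => ?_
  exact convexOn_Icc_exp_mul_eval_sub_sq hm hS1 (by simpa using hS2) hN'
    fun t ht => hmf _ (hXcon.add_smul_sub_mem hx hy ht)

/-- Let `X ⊆ ℝⁿ` be closed convex and `f` a polynomial with `f ≥ m > 0`
on `X`. Then there exists `N₀ ∈ ℝ` such that for all `N ≥ N₀` the function
`Φ_N(x) = e^{N e^{|x|²}} f(x)` is strongly convex on `X`. -/
theorem stmt13 {n : ℕ} (X : Set (EuclideanSpace ℝ (Fin n)))
    (hXcl : IsClosed X) (hXcon : Convex ℝ X)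
    (f : MvPolynomial (Fin n) ℝ) (m : ℝ) (hm : 0 < m)
    (hmf : ∀ x ∈ X, m ≤ MvPolynomial.eval (fun i => x i) f) :
    ∃ N₀ : ℝ, ∀ N : ℝ, N₀ ≤ N →
      ∃ μ > 0, StrongConvexOn X μ
        (fun x => Real.exp (N * Real.exp (‖x‖ ^ 2)) * MvPolynomial.eval (fun i => x i) f) :=
  stmt13_general X hXcon f m hm hmf
end

section
/- Let f(x,y) = -y² + y and X = {(x,y) ∈ ℝ² : e^{-e^x} ≤ y ≤ 1/2, x ≥ 0}. Then X is a closed convex set, f > 0 on X, but for every N ∈ ℝ the function Φ_N(x,y) = e^{e^{N(x²+y²)}} f(x,y) is not convex on X. -/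
open Real Set

lemma aux_cube_le_exp {x : ℝ} (hx : 0 ≤ x) : x ^ 3 / 6 ≤ Real.exp x := by
  have h := Real.sum_le_exp_of_nonneg hx 4
  simp [Finset.sum_range_succ, Nat.factorial] at h
  nlinarith [sq_nonneg x, hx]

lemma aux_exp_le_one_add {t : ℝ} (h0 : 0 ≤ t) (h1 : t ≤ 1) : Real.exp t ≤ 1 + 3 * t := by
  have h2 : 1 - t ≤ Real.exp (-t) := by
    have := Real.add_one_le_exp (-t); linarith
  have h3 : (1 - t) * Real.exp t ≤ 1 := by
    have := mul_le_mul_of_nonneg_right h2 (Real.exp_pos t).le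
    rw [← Real.exp_add] at this; simpa using this
  have h4 : Real.exp t ≤ Real.exp 1 := Real.exp_le_exp.2 h1
  have h5 : Real.exp 1 < 2.7182818286 := Real.exp_one_lt_d9
  nlinarith

lemma aux_exp_sub {a b u : ℝ} (hau : a ≤ u) :
    Real.exp a - Real.exp b ≤ Real.exp u * |a - b| := by
  rcases le_or_gt b a with hba | hab
  · have h1 : (b - a + 1) * Real.exp a ≤ Real.exp b := by
      have h := mul_le_mul_of_nonneg_right (Real.add_one_le_exp (b - a)) (Real.exp_pos a).le
      rw [← Real.exp_add] at h
      simpa using h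
    have h2 : Real.exp a ≤ Real.exp u := Real.exp_le_exp.2 hau
    have h3 : |a - b| = a - b := abs_of_nonneg (by linarith)
    rw [h3]
    nlinarith [Real.exp_pos a, sub_nonneg.2 hba]
  · have hlt : Real.exp a - Real.exp b < 0 := by
      have := Real.exp_lt_exp.2 hab; linarith
    have hpos : (0:ℝ) ≤ Real.exp u * |a - b| := by positivity
    linarith

lemma aux_gconv : ConvexOn ℝ (Ici (0:ℝ)) (fun x => Real.exp (-Real.exp x)) := by
  have hd1 : ∀ x : ℝ, HasDerivAt (fun x => Real.exp (-Real.exp x))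
      (Real.exp (-Real.exp x) * (-Real.exp x)) x := by
    intro x
    exact (Real.hasDerivAt_exp (-Real.exp x)).comp x ((Real.hasDerivAt_exp x).neg)
  have hderiv1 : deriv (fun x => Real.exp (-Real.exp x))
      = fun x => Real.exp (-Real.exp x) * (-Real.exp x) := funext fun x => (hd1 x).deriv
  have hd2 : ∀ x : ℝ, HasDerivAt (fun x => Real.exp (-Real.exp x) * (-Real.exp x))
      (Real.exp (-Real.exp x) * (-Real.exp x) * (-Real.exp x)
        + Real.exp (-Real.exp x) * (-Real.exp x)) x := by
    intro x
    exact (hd1 x).mul ((Real.hasDerivAt_exp x).neg)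
  apply convexOn_of_deriv2_nonneg' (convex_Ici 0)
  · exact fun x _ => (hd1 x).differentiableAt.differentiableWithinAt
  · rw [hderiv1]
    exact fun x _ => (hd2 x).differentiableAt.differentiableWithinAt
  · intro x hx
    have hit : deriv^[2] (fun x => Real.exp (-Real.exp x)) x
        = deriv (deriv (fun x => Real.exp (-Real.exp x))) x := by
      simp [Function.iterate_succ, Function.comp]
    rw [hit, hderiv1, (hd2 x).deriv]
    have h1 : (1:ℝ) ≤ Real.exp x := Real.one_le_exp hx
    have h2 : (0:ℝ) < Real.exp (-Real.exp x) := Real.exp_pos _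
    nlinarith [mul_nonneg (mul_nonneg h2.le (Real.exp_pos x).le) (sub_nonneg.2 h1)]

set_option maxHeartbeats 1600000 in
/-- With `f(x,y) = -y² + y` and
`X = {(x,y) : e^{-eˣ} ≤ y ≤ 1/2, x ≥ 0}`, the set `X` is closed and convex, `f > 0`
on `X`, but for every `N ∈ ℝ` the function `Φ_N(x,y) = e^{e^{N(x²+y²)}} f(x,y)` is not
convex on `X`. -/
theorem stmt14 :
    IsClosed {p : ℝ × ℝ | Real.exp (-Real.exp p.1) ≤ p.2 ∧ p.2 ≤ 1 / 2 ∧ 0 ≤ p.1} ∧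
    Convex ℝ {p : ℝ × ℝ | Real.exp (-Real.exp p.1) ≤ p.2 ∧ p.2 ≤ 1 / 2 ∧ 0 ≤ p.1} ∧
    (∀ p ∈ {p : ℝ × ℝ | Real.exp (-Real.exp p.1) ≤ p.2 ∧ p.2 ≤ 1 / 2 ∧ 0 ≤ p.1},
      0 < -p.2 ^ 2 + p.2) ∧
    ∀ N : ℝ, ¬ ConvexOn ℝ
      {p : ℝ × ℝ | Real.exp (-Real.exp p.1) ≤ p.2 ∧ p.2 ≤ 1 / 2 ∧ 0 ≤ p.1}
      (fun p : ℝ × ℝ =>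
        Real.exp (Real.exp (N * (p.1 ^ 2 + p.2 ^ 2))) * (-p.2 ^ 2 + p.2)) := by
  refine ⟨?_, ?_, ?_, ?_⟩
  · have h1 : IsClosed {p : ℝ × ℝ | Real.exp (-Real.exp p.1) ≤ p.2} :=
      isClosed_le (by fun_prop) continuous_snd
    have h2 : IsClosed {p : ℝ × ℝ | p.2 ≤ 1 / 2} := isClosed_le continuous_snd continuous_const
    have h3 : IsClosed {p : ℝ × ℝ | 0 ≤ p.1} := isClosed_le continuous_const continuous_fst
    exact h1.inter (h2.inter h3)
  · intro p hp q hq s t hs ht hst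
    obtain ⟨hp1, hp2, hp3⟩ := hp
    obtain ⟨hq1, hq2, hq3⟩ := hq
    have hfst : (s • p + t • q).1 = s * p.1 + t * q.1 := rfl
    have hsnd : (s • p + t • q).2 = s * p.2 + t * q.2 := rfl
    refine ⟨?_, ?_, ?_⟩
    · rw [hfst, hsnd]
      have h := aux_gconv.2 (mem_Ici.2 hp3) (mem_Ici.2 hq3) hs ht hst
      simp only [smul_eq_mul] at h
      calc Real.exp (-Real.exp (s * p.1 + t * q.1))
          ≤ s * Real.exp (-Real.exp p.1) + t * Real.exp (-Real.exp q.1) := h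
        _ ≤ s * p.2 + t * q.2 :=
            add_le_add (mul_le_mul_of_nonneg_left hp1 hs) (mul_le_mul_of_nonneg_left hq1 ht)
    · rw [hsnd]
      calc s * p.2 + t * q.2 ≤ s * (1/2) + t * (1/2) :=
            add_le_add (mul_le_mul_of_nonneg_left hp2 hs) (mul_le_mul_of_nonneg_left hq2 ht)
        _ = 1/2 := by rw [← add_mul, hst, one_mul]
    · rw [hfst]
      exact add_nonneg (mul_nonneg hs hp3) (mul_nonneg ht hq3)
  · rintro p ⟨h1, h2, -⟩
    have h0 : 0 < p.2 := lt_of_lt_of_le (Real.exp_pos _) h1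
    nlinarith
  · intro N hcv
    obtain ⟨M, hMdef⟩ : ∃ m : ℝ, m = |N| := ⟨_, rfl⟩
    have hM0 : 0 ≤ M := hMdef ▸ abs_nonneg N
    obtain ⟨x0, hx0def⟩ : ∃ z : ℝ, z = 6 * M + 42 := ⟨_, rfl⟩
    have hx0 : (0:ℝ) ≤ x0 := by rw [hx0def]; linarith
    obtain ⟨c, hcdef⟩ : ∃ z : ℝ, z = Real.exp x0 := ⟨_, rfl⟩
    have hc3 : x0 ^ 3 / 6 ≤ c := hcdef ▸ aux_cube_le_exp hx0
    obtain ⟨ε, hεdef⟩ : ∃ z : ℝ, z = Real.exp (-c) := ⟨_, rfl⟩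
    have hεpos : 0 < ε := hεdef ▸ Real.exp_pos _
    have hx3 : x0 ^ 3 / 6 = M * x0 ^ 2 + 7 * x0 ^ 2 := by rw [hx0def]; ring
    have h41 : 41 * M ≤ 7 * x0 ^ 2 := by rw [hx0def]; nlinarith [sq_nonneg M]
    have hA : M * (x0 ^ 2 + 1) + 40 * M ≤ c := by nlinarith [hc3, hx3, h41]
    have h12348 : (12348:ℝ) ≤ x0 ^ 3 / 6 := by
      rw [hx0def]; nlinarith [sq_nonneg M, mul_nonneg hM0 (mul_nonneg hM0 hM0)]
    have hc882 : (882:ℝ) ≤ c := by linarith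
    have hε100 : ε ≤ 1 / 100 := by
      have h1 : (100:ℝ) ≤ Real.exp c := by
        have := Real.add_one_le_exp c; linarith
      rw [hεdef, Real.exp_neg, show (1:ℝ)/100 = ((100:ℝ))⁻¹ by norm_num]
      exact inv_anti₀ (by norm_num) h1
    -- key smallness bound
    have hR : 40 * M ≤ Real.exp (c - M * (x0 ^ 2 + 1)) := by
      have h := Real.add_one_le_exp (c - M * (x0 ^ 2 + 1)); linarith
    have hkey : 40 * M * (ε * Real.exp (M * (x0 ^ 2 + 1))) ≤ 1 := by
      have hε_eq : ε * Real.exp (M * (x0 ^ 2 + 1)) = Real.exp (M * (x0 ^ 2 + 1) - c) := by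
        rw [hεdef, ← Real.exp_add]; ring_nf
      rw [hε_eq]
      have hmul := mul_le_mul_of_nonneg_right hR (Real.exp_pos (M * (x0 ^ 2 + 1) - c)).le
      rw [← Real.exp_add] at hmul
      have h0 : c - M * (x0 ^ 2 + 1) + (M * (x0 ^ 2 + 1) - c) = 0 := by ring
      rw [h0, Real.exp_zero] at hmul
      exact hmul
    have hδ : Real.exp (M * (x0 ^ 2 + 1)) * (5 * M * ε ^ 2) ≤ ε / 8 := by
      have heq : Real.exp (M * (x0 ^ 2 + 1)) * (5 * M * ε ^ 2)
          = (40 * M * (ε * Real.exp (M * (x0 ^ 2 + 1)))) * (ε / 8) := by ring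
      rw [heq]
      calc (40 * M * (ε * Real.exp (M * (x0 ^ 2 + 1)))) * (ε / 8)
          ≤ 1 * (ε / 8) := mul_le_mul_of_nonneg_right hkey (by linarith)
        _ = ε / 8 := one_mul _
    -- the three points
    have hεe : Real.exp (-Real.exp x0) = ε := by rw [hεdef, hcdef]
    have ha : ((x0, ε) : ℝ × ℝ) ∈
        {p : ℝ × ℝ | Real.exp (-Real.exp p.1) ≤ p.2 ∧ p.2 ≤ 1 / 2 ∧ 0 ≤ p.1} :=
      ⟨hεe.le, by show ε ≤ 1 / 2; linarith, hx0⟩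
    have hb : ((x0, 3 * ε) : ℝ × ℝ) ∈
        {p : ℝ × ℝ | Real.exp (-Real.exp p.1) ≤ p.2 ∧ p.2 ≤ 1 / 2 ∧ 0 ≤ p.1} :=
      ⟨by show Real.exp (-Real.exp x0) ≤ 3 * ε; rw [hεe]; linarith,
       by show 3 * ε ≤ 1 / 2; linarith, hx0⟩
    have hmid0 := hcv.2 ha hb (by norm_num : (0:ℝ) ≤ 1/2) (by norm_num : (0:ℝ) ≤ 1/2)
      (by norm_num : (1:ℝ)/2 + 1/2 = 1)
    have hpt : ((1/2:ℝ)) • ((x0, ε) : ℝ × ℝ) + (1/2:ℝ) • ((x0, 3 * ε) : ℝ × ℝ)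
        = ((x0, 2 * ε) : ℝ × ℝ) := by
      rw [Prod.smul_mk, Prod.smul_mk, Prod.mk_add_mk, Prod.mk.injEq]
      refine ⟨?_, ?_⟩ <;> · show _ = _; simp only [smul_eq_mul]; ring
    rw [hpt] at hmid0
    have hmid : Real.exp (Real.exp (N * (x0 ^ 2 + (2 * ε) ^ 2))) * (-(2 * ε) ^ 2 + 2 * ε)
        ≤ (1/2) * (Real.exp (Real.exp (N * (x0 ^ 2 + ε ^ 2))) * (-ε ^ 2 + ε))
          + (1/2) * (Real.exp (Real.exp (N * (x0 ^ 2 + (3 * ε) ^ 2)))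
              * (-(3 * ε) ^ 2 + 3 * ε)) := hmid0
    clear hmid0
    -- exponent bounds
    have hsq1 : ε ^ 2 ≤ 1 := by nlinarith
    have hsq3 : (3 * ε) ^ 2 ≤ 1 := by nlinarith
    have hU1 : N * (x0 ^ 2 + ε ^ 2) ≤ M * (x0 ^ 2 + 1) := by
      calc N * (x0 ^ 2 + ε ^ 2) ≤ |N * (x0 ^ 2 + ε ^ 2)| := le_abs_self _
        _ = M * (x0 ^ 2 + ε ^ 2) := by
            rw [abs_mul, abs_of_nonneg (by positivity : (0:ℝ) ≤ x0 ^ 2 + ε ^ 2), hMdef]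
        _ ≤ M * (x0 ^ 2 + 1) :=
            mul_le_mul_of_nonneg_left (by linarith) hM0
    have hU2 : N * (x0 ^ 2 + (3 * ε) ^ 2) ≤ M * (x0 ^ 2 + 1) := by
      calc N * (x0 ^ 2 + (3 * ε) ^ 2) ≤ |N * (x0 ^ 2 + (3 * ε) ^ 2)| := le_abs_self _
        _ = M * (x0 ^ 2 + (3 * ε) ^ 2) := by
            rw [abs_mul, abs_of_nonneg (by positivity : (0:ℝ) ≤ x0 ^ 2 + (3 * ε) ^ 2), hMdef]
        _ ≤ M * (x0 ^ 2 + 1) :=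
            mul_le_mul_of_nonneg_left (by linarith) hM0
    have hd1 : Real.exp (N * (x0 ^ 2 + ε ^ 2)) ≤ Real.exp (N * (x0 ^ 2 + (2 * ε) ^ 2)) + ε / 8 := by
      have h := aux_exp_sub (b := N * (x0 ^ 2 + (2 * ε) ^ 2)) hU1
      have habs : |N * (x0 ^ 2 + ε ^ 2) - N * (x0 ^ 2 + (2 * ε) ^ 2)| = M * (3 * ε ^ 2) := by
        have he : N * (x0 ^ 2 + ε ^ 2) - N * (x0 ^ 2 + (2 * ε) ^ 2) = N * (-(3 * ε ^ 2)) := by ring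
        rw [he, abs_mul, abs_neg, abs_of_nonneg (by positivity : (0:ℝ) ≤ 3 * ε ^ 2), hMdef]
      rw [habs] at h
      have h2 : Real.exp (M * (x0 ^ 2 + 1)) * (M * (3 * ε ^ 2))
          ≤ Real.exp (M * (x0 ^ 2 + 1)) * (5 * M * ε ^ 2) := by
        have h3 := (Real.exp_pos (M * (x0 ^ 2 + 1))).le
        have h4 : M * (3 * ε ^ 2) ≤ 5 * M * ε ^ 2 := by linarith [mul_nonneg hM0 (sq_nonneg ε)]
        exact mul_le_mul_of_nonneg_left h4 h3
      linarith
    have hd2 : Real.exp (N * (x0 ^ 2 + (3 * ε) ^ 2))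
        ≤ Real.exp (N * (x0 ^ 2 + (2 * ε) ^ 2)) + ε / 8 := by
      have h := aux_exp_sub (b := N * (x0 ^ 2 + (2 * ε) ^ 2)) hU2
      have habs : |N * (x0 ^ 2 + (3 * ε) ^ 2) - N * (x0 ^ 2 + (2 * ε) ^ 2)|
          = M * (5 * ε ^ 2) := by
        have he : N * (x0 ^ 2 + (3 * ε) ^ 2) - N * (x0 ^ 2 + (2 * ε) ^ 2) = N * (5 * ε ^ 2) := by
          ring
        rw [he, abs_mul, abs_of_nonneg (by positivity : (0:ℝ) ≤ 5 * ε ^ 2), hMdef]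
      rw [habs] at h
      have h2 : Real.exp (M * (x0 ^ 2 + 1)) * (M * (5 * ε ^ 2))
          = Real.exp (M * (x0 ^ 2 + 1)) * (5 * M * ε ^ 2) := by ring
      rw [h2] at h
      linarith
    -- final comparison
    obtain ⟨Em, hEmdef⟩ : ∃ z : ℝ, z = Real.exp (Real.exp (N * (x0 ^ 2 + (2 * ε) ^ 2))) :=
      ⟨_, rfl⟩
    have hEmpos : 0 < Em := hEmdef ▸ Real.exp_pos _
    rw [← hEmdef] at hmid
    have hexp8 : Real.exp (ε / 8) ≤ 1 + 3 * (ε / 8) :=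
      aux_exp_le_one_add (by linarith) (by linarith)
    have hEa : Real.exp (Real.exp (N * (x0 ^ 2 + ε ^ 2))) ≤ Em * (1 + 3 * (ε / 8)) := by
      calc Real.exp (Real.exp (N * (x0 ^ 2 + ε ^ 2)))
          ≤ Real.exp (Real.exp (N * (x0 ^ 2 + (2 * ε) ^ 2)) + ε / 8) := Real.exp_le_exp.2 hd1
        _ = Em * Real.exp (ε / 8) := by rw [Real.exp_add, hEmdef]
        _ ≤ Em * (1 + 3 * (ε / 8)) := mul_le_mul_of_nonneg_left hexp8 hEmpos.le
    have hEb : Real.exp (Real.exp (N * (x0 ^ 2 + (3 * ε) ^ 2))) ≤ Em * (1 + 3 * (ε / 8)) := by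
      calc Real.exp (Real.exp (N * (x0 ^ 2 + (3 * ε) ^ 2)))
          ≤ Real.exp (Real.exp (N * (x0 ^ 2 + (2 * ε) ^ 2)) + ε / 8) := Real.exp_le_exp.2 hd2
        _ = Em * Real.exp (ε / 8) := by rw [Real.exp_add, hEmdef]
        _ ≤ Em * (1 + 3 * (ε / 8)) := mul_le_mul_of_nonneg_left hexp8 hEmpos.le
    have hfa : (0:ℝ) < -ε ^ 2 + ε := by nlinarith
    have hfb : (0:ℝ) < -(3 * ε) ^ 2 + 3 * ε := by nlinarith
    have t1 : Real.exp (Real.exp (N * (x0 ^ 2 + ε ^ 2))) * (-ε ^ 2 + ε)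
        ≤ Em * (1 + 3 * (ε / 8)) * (-ε ^ 2 + ε) := mul_le_mul_of_nonneg_right hEa hfa.le
    have t2 : Real.exp (Real.exp (N * (x0 ^ 2 + (3 * ε) ^ 2))) * (-(3 * ε) ^ 2 + 3 * ε)
        ≤ Em * (1 + 3 * (ε / 8)) * (-(3 * ε) ^ 2 + 3 * ε) :=
      mul_le_mul_of_nonneg_right hEb hfb.le
    have hq : (1 + 3 * (ε / 8)) * (-ε ^ 2 + ε) * (1/2)
        + (1 + 3 * (ε / 8)) * (-(3 * ε) ^ 2 + 3 * ε) * (1/2) < -(2 * ε) ^ 2 + 2 * ε := by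
      nlinarith
    have hfin : Em * (1 + 3 * (ε / 8)) * (-ε ^ 2 + ε) * (1/2)
        + Em * (1 + 3 * (ε / 8)) * (-(3 * ε) ^ 2 + 3 * ε) * (1/2)
        < Em * (-(2 * ε) ^ 2 + 2 * ε) := by
      have h := mul_lt_mul_of_pos_left hq hEmpos
      nlinarith [h]
    nlinarith [hmid, t1, t2, hfin]
end
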